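/- arXiv:1509.05324 — 6 statements merged into one kernel-verified Lean document; each statement's English description precedes it below -/
import Mathlib

section
/- A compact Hausdorff space K is quasi weakly Radon–Nikodým if and only if there exist a set Γ and a homeomorphic embedding of K into [0,1]^Γ such that for every pair of real numbers p < q there exists a countable decomposition Γ = ⋃_{n∈ℕ} Γₙ^{p,q} such that for every n ∈ ℕ the family of pairs (A_α⁰, A_α¹)_{α∈Γₙ^{p,q}} does not contain an independent sequence, where A_α⁰ = {x ∈ K : x_α < p} and A_α¹ = {x ∈ K : x_α > q} for every α ∈ Γ. -/
open Set Function

/-- A sequence of pairs of subsets `(A n, B n)` of a set `S` is *independent* if for every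
`n` and every choice function `ε`, the intersection over `k < n` of `A k` (if `ε k = 0/false`)
or `B k` (if `ε k = 1/true`) is nonempty. -/
def IsIndependentSeq {S : Type*} (A B : ℕ → Set S) : Prop :=
  ∀ (n : ℕ) (ε : Fin n → Bool),
    (⋂ k : Fin n, if ε k = true then B (k : ℕ) else A (k : ℕ)).Nonempty

/-- A compact space `K` is *quasi weakly Radon–Nikodým* (QWRN) if there is a homeomorphic
embedding `i` of `K` into `[0,1]^Γ` for some set `Γ` such that for every `ε > 0` there is a
countable decomposition `Γ = ⋃ n, Γs n` such that for every `n` and all reals `p < q` with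
`q - p > ε`, the family of pairs `({x | (i x α : ℝ) < p}, {x | (i x α : ℝ) > q})`, `α ∈ Γs n`,
contains no independent sequence. -/
def IsQWRN (K : Type*) [TopologicalSpace K] : Prop :=
  ∃ (Γ : Type) (i : K → Γ → unitInterval), Topology.IsEmbedding i ∧
    ∀ ε : ℝ, ε > 0 → ∃ Γs : ℕ → Set Γ, (⋃ n, Γs n) = Set.univ ∧
      ∀ n : ℕ, ∀ p q : ℝ, q - p > ε →
        ¬ ∃ φ : ℕ → Γ, (∀ m, φ m ∈ Γs n) ∧
          IsIndependentSeq (fun m => {x : K | (i x (φ m) : ℝ) < p})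
                           (fun m => {x : K | (i x (φ m) : ℝ) > q})

lemma indep_mono' {S : Type*} {A B A' B' : ℕ → Set S}
    (hA : ∀ m, A m ⊆ A' m) (hB : ∀ m, B m ⊆ B' m)
    (h : IsIndependentSeq A B) : IsIndependentSeq A' B' := by
  intro n ε
  refine (h n ε).mono (iInter_mono fun k => ?_)
  cases hε : ε k <;> simp [hε] <;> [exact hA k; exact hB k]


/-- A compact Hausdorff space `K` is QWRN iff there is a set `Γ` and a homeomorphic embedding
of `K` into `[0,1]^Γ` such that for every pair of reals `p < q` there is a countable
decomposition `Γ = ⋃ n, Γs n` such that for every `n` the family of pairs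
`({x | x_α < p}, {x | x_α > q})`, `α ∈ Γs n`, contains no independent sequence. -/
theorem isQWRN_iff_countable_decomposition_for_each_pair
    (K : Type*) [TopologicalSpace K] [CompactSpace K] [T2Space K] :
    IsQWRN K ↔ ∃ (Γ : Type) (i : K → Γ → unitInterval), Topology.IsEmbedding i ∧
      ∀ p q : ℝ, p < q → ∃ Γs : ℕ → Set Γ, (⋃ n, Γs n) = Set.univ ∧
        ∀ n : ℕ, ¬ ∃ φ : ℕ → Γ, (∀ m, φ m ∈ Γs n) ∧
          IsIndependentSeq (fun m => {x : K | (i x (φ m) : ℝ) < p})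
                           (fun m => {x : K | (i x (φ m) : ℝ) > q}) := by
  constructor
  · rintro ⟨Γ, i, hemb, h⟩
    refine ⟨Γ, i, hemb, fun p q hpq => ?_⟩
    obtain ⟨Γs, hcov, hn⟩ := h ((q - p) / 2) (by linarith)
    exact ⟨Γs, hcov, fun n => hn n p q (by linarith)⟩
  · rintro ⟨Γ, i, hemb, h⟩
    refine ⟨Γ, i, hemb, fun ε hε => ?_⟩
    -- choose N with 2 / N < ε / 2, i.e. N > 4 / ε
    obtain ⟨N, hN⟩ := exists_nat_gt (4 / ε)
    have hN0 : (0 : ℝ) < N := lt_of_le_of_lt (by positivity) hN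
    -- for each pair (j, k) in the grid, a decomposition good for (j/N, k/N)
    have hG : ∀ π : Fin (N + 1) × Fin (N + 1),
        ∃ G : ℕ → Set Γ, (⋃ n, G n) = Set.univ ∧
          ((π.1 : ℝ) / N < (π.2 : ℝ) / N → ∀ n : ℕ,
            ¬ ∃ φ : ℕ → Γ, (∀ m, φ m ∈ G n) ∧
              IsIndependentSeq (fun m => {x : K | (i x (φ m) : ℝ) < (π.1 : ℝ) / N})
                               (fun m => {x : K | (i x (φ m) : ℝ) > (π.2 : ℝ) / N})) := by
      intro π
      by_cases hlt : (π.1 : ℝ) / N < (π.2 : ℝ) / N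
      · obtain ⟨G, hGcov, hGn⟩ := h _ _ hlt
        exact ⟨G, hGcov, fun _ => hGn⟩
      · exact ⟨fun _ => Set.univ, Set.iUnion_const _, fun hc => absurd hc hlt⟩
    choose G hGcov hGgood using hG
    obtain ⟨e, he⟩ := exists_surjective_nat (Fin (N + 1) × Fin (N + 1) → ℕ)
    refine ⟨fun n => ⋂ π, G π (e n π), ?_, ?_⟩
    · ext γ
      simp only [mem_iUnion, mem_iInter, mem_univ, iff_true]
      have hsel : ∀ π, ∃ m, γ ∈ G π m := by
        intro π
        have := hGcov π
        have : γ ∈ ⋃ n, G π n := this ▸ mem_univ γ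
        simpa using this
      choose f hf using hsel
      obtain ⟨n, hn⟩ := he f
      exact ⟨n, fun π => hn ▸ hf π⟩
    · rintro n p q hpq ⟨φ, hφ, hind⟩
      rcases le_or_gt p 0 with hp | hp
      · obtain ⟨x, hx⟩ := hind 1 (fun _ => false)
        simp only [mem_iInter] at hx
        have hx0 := hx 0
        simp only [Bool.false_eq_true, if_false, mem_setOf_eq] at hx0
        exact absurd hx0 (not_lt.2 (hp.trans (i x (φ 0)).2.1))
      rcases le_or_gt 1 q with hq | hq
      · obtain ⟨x, hx⟩ := hind 1 (fun _ => true)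
        simp only [mem_iInter] at hx
        have hx0 := hx 0
        exact absurd hx0 (not_lt.2 ((i x (φ 0)).2.2.trans hq))
      -- now 0 < p and q < 1; find grid points
      have hp1 : p < 1 := by nlinarith [hε]
      have hq0 : 0 < q := by linarith
      set j : ℤ := ⌈p * N⌉ with hj
      set k : ℤ := ⌊q * N⌋ with hk
      have hj0 : 0 ≤ j := Int.ceil_nonneg (by positivity)
      have hjN : j ≤ N := by
        have : p * N < N := by nlinarith
        exact Int.ceil_le.2 (by exact_mod_cast this.le)
      have hk0 : 0 ≤ k := Int.le_floor.2 (by push_cast; positivity)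
      have hkN : k ≤ N := by
        have h1 : (k : ℝ) ≤ (N : ℝ) := (Int.floor_le (q * N)).trans (by nlinarith)
        exact_mod_cast h1
      have hjub : (j : ℝ) < p * N + 1 := Int.ceil_lt_add_one _
      have hjlb : p * N ≤ (j : ℝ) := Int.le_ceil _
      have hkub : (k : ℝ) ≤ q * N := Int.floor_le _
      have hklb : q * N - 1 < (k : ℝ) := by
        have := Int.sub_one_lt_floor (q * N); linarith
      have h4 : (4 : ℝ) < ε * N := by
        rw [div_lt_iff₀ hε] at hN; linarith
      -- the grid reals
      have hple : p ≤ (j : ℝ) / N := by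
        rw [le_div_iff₀ hN0]; linarith
      have hqge : (k : ℝ) / N ≤ q := by
        rw [div_le_iff₀ hN0]; linarith
      have hjk' : (j : ℝ) < (k : ℝ) := by
        nlinarith [mul_lt_mul_of_pos_right hpq hN0]
      have hjk : (j : ℝ) / N < (k : ℝ) / N := by gcongr
      -- package as Fin elements
      set π : Fin (N + 1) × Fin (N + 1) :=
        (⟨j.toNat, by omega⟩, ⟨k.toNat, by omega⟩) with hπ
      have hπ1 : ((π.1 : ℕ) : ℝ) = (j : ℝ) := by
        simp only [hπ]
        exact_mod_cast Int.toNat_of_nonneg hj0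
      have hπ2 : ((π.2 : ℕ) : ℝ) = (k : ℝ) := by
        simp only [hπ]
        exact_mod_cast Int.toNat_of_nonneg hk0
      refine hGgood π (by rw [hπ1, hπ2]; exact hjk) (e n π)
        ⟨φ, fun m => ?_, ?_⟩
      · exact mem_iInter.1 (hφ m) π
      · rw [hπ1, hπ2]
        refine indep_mono' (fun m x hx => ?_) (fun m x hx => ?_) hind
        · exact lt_of_lt_of_le hx hple
        · exact lt_of_le_of_lt hqge hx
end

section
/- Let (Aₙ⁰, Aₙ¹)_{n∈ℕ} be an independent sequence of disjoint pairs of subsets of a set S. Suppose there exist N ∈ ℕ and N sequences of disjoint pairs (A_{n,j}⁰, A_{n,j}¹)_{n∈ℕ}, for j = 1, 2, …, N, such that Aₙ⁰ × Aₙ¹ ⊆ ⋃_{j=1}^{N} A_{n,j}⁰ × A_{n,j}¹ for every n ∈ ℕ. Then there exist j₀ ∈ {1, 2, …, N} and a strictly increasing sequence (n_k)_{k∈ℕ} of natural numbers such that (A_{n_k, j₀}⁰, A_{n_k, j₀}¹)_{k∈ℕ} is an independent sequence. -/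
open Set Function

/-- Independence phrased with finite subsets of `ℕ` and total choice functions. -/
private def FinIndep {S : Type*} (A B : ℕ → Set S) : Prop :=
  ∀ (F : Finset ℕ) (ε : ℕ → Bool), (⋂ n ∈ F, if ε n = true then B n else A n).Nonempty

/-- `(t, X)` is a good state: every pattern using `C0/D0` on `t` and `A/B` on a finite
subset of `X` has nonempty intersection. -/
private def Good {S : Type*} (A B C0 D0 : ℕ → Set S) (t : Finset ℕ) (X : Set ℕ) : Prop :=
  ∀ F : Finset ℕ, ↑F ⊆ X → ∀ ε : ℕ → Bool,
    ((⋂ i ∈ t, if ε i = true then D0 i else C0 i) ∩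
      ⋂ p ∈ F, if ε p = true then B p else A p).Nonempty

private def GSt {S : Type*} (A B C0 D0 : ℕ → Set S) (t : Finset ℕ) (X : Set ℕ) : Prop :=
  Good A B C0 D0 t X ∧ X.Infinite ∧ ∀ i ∈ t, i ∉ X

private lemma key {S : Type*} : ∀ (N : ℕ) (A B : ℕ → Set S), FinIndep A B →
    ∀ (C D : Fin N → ℕ → Set S),
    (∀ n, A n ×ˢ B n ⊆ ⋃ j : Fin N, C j n ×ˢ D j n) →
    ∃ (j₀ : Fin N) (nk : ℕ → ℕ), StrictMono nk ∧
      FinIndep (fun k => C j₀ (nk k)) (fun k => D j₀ (nk k)) := by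
  intro N
  induction N with
  | zero =>
    intro A B hInd C D hcover
    exfalso
    obtain ⟨x, hx⟩ := hInd {0} (fun _ => false)
    obtain ⟨y, hy⟩ := hInd {0} (fun _ => true)
    simp only [Set.mem_iInter] at hx hy
    have hx0 : x ∈ A 0 := by simpa using hx 0 (by simp)
    have hy0 : y ∈ B 0 := by simpa using hy 0 (by simp)
    have := hcover 0 (Set.mk_mem_prod hx0 hy0)
    simpa using this
  | succ N IH =>
    intro A B hInd C D hcover
    classical
    set C0 : ℕ → Set S := C (Fin.last N) with hC0def
    set D0 : ℕ → Set S := D (Fin.last N) with hD0def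
    by_cases H : ∀ t X, GSt A B C0 D0 t X →
        ∃ n ∈ X, GSt A B C0 D0 (insert n t) (X ∩ Set.Ioi n)
    · -- Case 1: we can always extend a good state; build the sequence greedily.
      have hP0 : GSt A B C0 D0 ∅ Set.univ := by
        refine ⟨?_, Set.infinite_univ, by simp⟩
        intro F _ ε
        simpa using hInd F ε
      have Hext : ∀ s : {p : Finset ℕ × Set ℕ // GSt A B C0 D0 p.1 p.2},
          ∃ n, n ∈ s.1.2 ∧ GSt A B C0 D0 (insert n s.1.1) (s.1.2 ∩ Set.Ioi n) := by
        rintro ⟨⟨t, X⟩, hp⟩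
        obtain ⟨n, hn1, hn2⟩ := H t X hp
        exact ⟨n, hn1, hn2⟩
      choose pick hmem hpick using Hext
      set step : {p : Finset ℕ × Set ℕ // GSt A B C0 D0 p.1 p.2} →
          {p : Finset ℕ × Set ℕ // GSt A B C0 D0 p.1 p.2} :=
        fun s => ⟨(insert (pick s) s.1.1, s.1.2 ∩ Set.Ioi (pick s)), hpick s⟩ with hstepdef
      set st : ℕ → {p : Finset ℕ × Set ℕ // GSt A B C0 D0 p.1 p.2} :=
        fun k => step^[k] ⟨(∅, Set.univ), hP0⟩ with hstdef
      set nk : ℕ → ℕ := fun k => pick (st k) with hnkdef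
      have hst_succ : ∀ k, st (k + 1) = step (st k) := by
        intro k
        simp only [hstdef]
        exact Function.iterate_succ_apply' step k _
      have hst1 : ∀ k, (st (k + 1)).1.1 = insert (nk k) (st k).1.1 := by
        intro k; rw [hst_succ k]
      have hst2 : ∀ k, (st (k + 1)).1.2 = (st k).1.2 ∩ Set.Ioi (nk k) := by
        intro k; rw [hst_succ k]
      have hmono : StrictMono nk := by
        apply strictMono_nat_of_lt_succ
        intro k
        have h1 : nk (k + 1) ∈ (st (k + 1)).1.2 := hmem (st (k + 1))
        rw [hst2 k] at h1
        exact h1.2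
      have hmem_t : ∀ K k, k < K → nk k ∈ (st K).1.1 := by
        intro K
        induction K with
        | zero => intro k hk; omega
        | succ K ih =>
          intro k hk
          rw [hst1 K]
          rcases Nat.lt_succ_iff_lt_or_eq.mp hk with h | h
          · exact Finset.mem_insert_of_mem (ih k h)
          · subst h; exact Finset.mem_insert_self _ _
      refine ⟨Fin.last N, nk, hmono, ?_⟩
      intro F ε
      set K : ℕ := F.sup id + 1 with hKdef
      have hGoodK : Good A B C0 D0 (st K).1.1 (st K).1.2 := (st K).2.1
      set ε' : ℕ → Bool := fun p => if h : ∃ k, k ∈ F ∧ nk k = p then ε h.choose else false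
        with hε'def
      obtain ⟨x, hx⟩ := hGoodK ∅ (by simp) ε'
      refine ⟨x, ?_⟩
      simp only [Set.mem_iInter]
      intro k hk
      have hkK : k < K := Nat.lt_succ_of_le (Finset.le_sup (f := id) hk)
      have h1 : nk k ∈ (st K).1.1 := hmem_t K k hkK
      have hx1 : x ∈ ⋂ i ∈ (st K).1.1, if ε' i = true then D0 i else C0 i := hx.1
      simp only [Set.mem_iInter] at hx1
      have hx2 := hx1 (nk k) h1
      have hεeq : ε' (nk k) = ε k := by
        have hex : ∃ k', k' ∈ F ∧ nk k' = nk k := ⟨k, hk, rfl⟩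
        rw [hε'def]
        simp only [dif_pos hex]
        obtain ⟨h3, h4⟩ := hex.choose_spec
        rw [hmono.injective h4]
      rw [hεeq] at hx2
      exact hx2
    · -- Case 2: some good state has no good extension; shave and induct.
      push_neg at H
      obtain ⟨tb, Xb, hPb, hnoext⟩ := H
      obtain ⟨hGood, hXinf, hdisj⟩ := hPb
      -- extract bad witnesses
      have hbadW : ∀ n, ∃ (F : Finset ℕ) (ε : ℕ → Bool), n ∈ Xb →
          (↑F ⊆ Xb ∩ Set.Ioi n ∧
            ((⋂ i ∈ insert n tb, if ε i = true then D0 i else C0 i) ∩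
              ⋂ p ∈ F, if ε p = true then B p else A p) = ∅) := by
        intro n
        by_cases hn : n ∈ Xb
        · have hinf' : (Xb ∩ Set.Ioi n).Infinite := by
            apply (hXinf.diff (Set.finite_Iic n)).mono
            intro x hx
            exact ⟨hx.1, by simpa using hx.2⟩
          have hside : ∀ i ∈ insert n tb, i ∉ Xb ∩ Set.Ioi n := by
            intro i hi
            rcases Finset.mem_insert.mp hi with h | h
            · subst h; intro hmem'; exact lt_irrefl i hmem'.2
            · intro hmem'; exact hdisj i h hmem'.1
          have hng : ¬ Good A B C0 D0 (insert n tb) (Xb ∩ Set.Ioi n) := by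
            intro hg
            exact hnoext n hn ⟨hg, hinf', hside⟩
          rw [Good] at hng
          push_neg at hng
          obtain ⟨F, hF, ε, hε⟩ := hng
          exact ⟨F, ε, fun _ => ⟨hF, hε⟩⟩
        · exact ⟨∅, fun _ => false, fun h => absurd h hn⟩
      choose Fn εn hW using hbadW
      -- pigeonhole: an infinite subset of Xb on which the trace of εn on tb is constant
      have hpig : ∃ (η : ℕ → Bool) (X0 : Set ℕ), X0 ⊆ Xb ∧ X0.Infinite ∧
          ∀ n ∈ X0, ∀ i ∈ tb, εn n i = η i := by
        haveI : Infinite ↥Xb := Set.infinite_coe_iff.mpr hXinf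
        obtain ⟨y, hy⟩ := Finite.exists_infinite_fiber
          (fun x : ↥Xb => (fun i : ↥tb => εn (x : ℕ) (i : ℕ)))
        refine ⟨fun i => if h : i ∈ tb then y ⟨i, h⟩ else false,
          Subtype.val '' ((fun x : ↥Xb => (fun i : ↥tb => εn (x : ℕ) (i : ℕ))) ⁻¹' {y}),
          ?_, ?_, ?_⟩
        · rintro _ ⟨x, _, rfl⟩; exact x.2
        · exact (Set.infinite_coe_iff.mp hy).image
            Subtype.val_injective.injOn
        · rintro _ ⟨x, hx, rfl⟩ i hi
          have hxy : (fun i : ↥tb => εn (x : ℕ) (i : ℕ)) = y := hx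
          have := congrFun hxy ⟨i, hi⟩
          simpa [hi] using this
      obtain ⟨η, X0, hX0sub, hX0inf, hX0η⟩ := hpig
      -- greedy selection of m with separated blocks
      have hgt : ∀ a : ℕ, ∃ b, b ∈ X0 ∧ a < b := fun a => hX0inf.exists_gt a
      choose nxt hnxtmem hnxtgt using hgt
      set m : ℕ → ℕ := fun k =>
        Nat.rec (nxt 0) (fun _ prev => nxt ((insert prev (Fn prev)).sup id)) k with hmdef
      have hm_succ : ∀ k, m (k + 1) = nxt ((insert (m k) (Fn (m k))).sup id) := fun k => rfl
      have hm_mem : ∀ k, m k ∈ X0 := by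
        intro k
        cases k with
        | zero => exact hnxtmem 0
        | succ k => rw [hm_succ k]; exact hnxtmem _
      have hFn_sub : ∀ k, ↑(Fn (m k)) ⊆ Xb ∩ Set.Ioi (m k) :=
        fun k => (hW (m k) (hX0sub (hm_mem k))).1
      have hblock_ub : ∀ k p, p ∈ insert (m k) (Fn (m k)) → p < m (k + 1) := by
        intro k p hp
        have h1 : p ≤ (insert (m k) (Fn (m k))).sup id := Finset.le_sup (f := id) hp
        have h2 := hnxtgt ((insert (m k) (Fn (m k))).sup id)
        rw [hm_succ k]
        omega
      have hblock_lb : ∀ k p, p ∈ insert (m k) (Fn (m k)) → m k ≤ p := by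
        intro k p hp
        rcases Finset.mem_insert.mp hp with h | h
        · omega
        · exact le_of_lt (hFn_sub k h).2
      have hm_mono : StrictMono m := by
        apply strictMono_nat_of_lt_succ
        intro k
        exact hblock_ub k (m k) (Finset.mem_insert_self _ _)
      have hblock_disj : ∀ k l p, p ∈ insert (m k) (Fn (m k)) →
          p ∈ insert (m l) (Fn (m l)) → k = l := by
        intro k l p hpk hpl
        by_contra hne
        rcases Nat.lt_or_ge k l with h | h
        · have h1 : p < m (k + 1) := hblock_ub k p hpk
          have h2 : m (k + 1) ≤ m l := hm_mono.monotone h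
          have h3 : m l ≤ p := hblock_lb l p hpl
          omega
        · have h' : l < k := by omega
          have h1 : p < m (l + 1) := hblock_ub l p hpl
          have h2 : m (l + 1) ≤ m k := hm_mono.monotone h'
          have h3 : m k ≤ p := hblock_lb k p hpk
          omega
      -- the shaved families
      set T : Set S := ⋂ i ∈ tb, if η i = true then D0 i else C0 i with hTdef
      set Q : ℕ → Set S := fun n => ⋂ p ∈ Fn n, if εn n p = true then B p else A p with hQdef
      set A' : ℕ → Set S := fun k => A (m k) ∩ (T ∩ Q (m k)) with hA'def
      set B' : ℕ → Set S := fun k => B (m k) ∩ (T ∩ Q (m k)) with hB'def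
      -- blocks are inside Xb
      have hblock_sub : ∀ k, ↑(insert (m k) (Fn (m k))) ⊆ Xb := by
        intro k p hp
        rcases Finset.mem_insert.mp (by exact_mod_cast hp) with h | h
        · subst h; exact hX0sub (hm_mem k)
        · exact (hFn_sub k h).1
      -- the key emptiness at each m k
      have hempty : ∀ k, ((if εn (m k) (m k) = true then D0 (m k) else C0 (m k)) ∩
          (T ∩ Q (m k))) = ∅ := by
        intro k
        have hb := (hW (m k) (hX0sub (hm_mem k))).2
        have hmemXb : m k ∈ Xb := hX0sub (hm_mem k)
        have hins : ⋂ i ∈ insert (m k) tb, (if εn (m k) i = true then D0 i else C0 i) =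
            (if εn (m k) (m k) = true then D0 (m k) else C0 (m k)) ∩
              ⋂ i ∈ tb, (if εn (m k) i = true then D0 i else C0 i) := by
          exact Finset.set_biInter_insert (m k) tb _
        have hTT : ⋂ i ∈ tb, (if εn (m k) i = true then D0 i else C0 i) = T := by
          rw [hTdef]
          apply Set.iInter₂_congr
          intro i hi
          rw [hX0η (m k) (hm_mem k) i hi]
        rw [hins, hTT] at hb
        rw [← Set.inter_assoc]
        exact hb
      -- independence of the shaved families
      have hInd' : FinIndep A' B' := by
        intro G ε
        set Fbig : Finset ℕ := G.biUnion (fun k => insert (m k) (Fn (m k))) with hFbigdef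
        have hFbigsub : ↑Fbig ⊆ Xb := by
          intro p hp
          obtain ⟨k, hk, hpk⟩ := Finset.mem_biUnion.mp (by exact_mod_cast hp)
          exact hblock_sub k (by exact_mod_cast hpk)
        set εbig : ℕ → Bool := fun p =>
          if h : ∃ k, k ∈ G ∧ p ∈ insert (m k) (Fn (m k)) then
            (if p = m h.choose then ε h.choose else εn (m h.choose) p)
          else η p with hεbigdef
        have hεtb : ∀ i ∈ tb, εbig i = η i := by
          intro i hi
          have hno : ¬ ∃ k, k ∈ G ∧ i ∈ insert (m k) (Fn (m k)) := by
            rintro ⟨k, _, hik⟩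
            exact hdisj i hi (hblock_sub k (by exact_mod_cast hik))
          rw [hεbigdef]
          simp only [dif_neg hno]
        have hεm : ∀ k ∈ G, εbig (m k) = ε k := by
          intro k hk
          have hex : ∃ k', k' ∈ G ∧ m k ∈ insert (m k') (Fn (m k')) :=
            ⟨k, hk, Finset.mem_insert_self _ _⟩
          rw [hεbigdef]
          simp only [dif_pos hex]
          obtain ⟨hk', hmem'⟩ := hex.choose_spec
          have heq : hex.choose = k := hblock_disj _ _ _ hmem' (Finset.mem_insert_self _ _)
          rw [heq, if_pos rfl]
        have hεF : ∀ k ∈ G, ∀ p ∈ Fn (m k), εbig p = εn (m k) p := by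
          intro k hk p hp
          have hpblock : p ∈ insert (m k) (Fn (m k)) := Finset.mem_insert_of_mem hp
          have hex : ∃ k', k' ∈ G ∧ p ∈ insert (m k') (Fn (m k')) := ⟨k, hk, hpblock⟩
          rw [hεbigdef]
          simp only [dif_pos hex]
          obtain ⟨hk', hmem'⟩ := hex.choose_spec
          have heq : hex.choose = k := hblock_disj _ _ _ hmem' hpblock
          rw [heq]
          have hne : p ≠ m k := by
            have := (hFn_sub k hp).2
            simp only [Set.mem_Ioi] at this
            omega
          rw [if_neg hne]
        obtain ⟨x, hxT, hxF⟩ := hGood Fbig hFbigsub εbig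
        simp only [Set.mem_iInter] at hxT hxF
        have hxT' : x ∈ T := by
          rw [hTdef]
          simp only [Set.mem_iInter]
          intro i hi
          have := hxT i hi
          rwa [hεtb i hi] at this
        refine ⟨x, ?_⟩
        simp only [Set.mem_iInter]
        intro k hk
        have hxQ : x ∈ Q (m k) := by
          rw [hQdef]
          simp only [Set.mem_iInter]
          intro p hp
          have hpF : p ∈ Fbig :=
            Finset.mem_biUnion.mpr ⟨k, hk, Finset.mem_insert_of_mem hp⟩
          have := hxF p hpF
          rwa [hεF k hk p hp] at this
        have hxm : x ∈ (if ε k = true then B (m k) else A (m k)) := by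
          have hpF : m k ∈ Fbig :=
            Finset.mem_biUnion.mpr ⟨k, hk, Finset.mem_insert_self _ _⟩
          have := hxF (m k) hpF
          rwa [hεm k hk] at this
        by_cases hck : ε k = true
        · rw [if_pos hck]
          rw [if_pos hck] at hxm
          exact ⟨hxm, hxT', hxQ⟩
        · rw [if_neg hck]
          rw [if_neg hck] at hxm
          exact ⟨hxm, hxT', hxQ⟩
      set C' : Fin N → ℕ → Set S := fun j k => C j.castSucc (m k) with hC'def
      set D' : Fin N → ℕ → Set S := fun j k => D j.castSucc (m k) with hD'def
      have hcover' : ∀ k, A' k ×ˢ B' k ⊆ ⋃ j : Fin N, C' j k ×ˢ D' j k := by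
        intro k
        rintro ⟨x, y⟩ hxy
        obtain ⟨hx, hy⟩ := hxy
        have h1 := hcover (m k) (Set.mk_mem_prod hx.1 hy.1)
        rw [Set.mem_iUnion] at h1
        obtain ⟨j, hj⟩ := h1
        rcases Fin.eq_castSucc_or_eq_last j with ⟨j', rfl⟩ | rfl
        · exact Set.mem_iUnion.mpr ⟨j', hj⟩
        · exfalso
          have he := hempty k
          by_cases hs : εn (m k) (m k) = true
          · rw [if_pos hs] at he
            have hmem2 : y ∈ D0 (m k) ∩ (T ∩ Q (m k)) := ⟨hj.2, hy.2⟩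
            rw [he] at hmem2
            exact hmem2
          · rw [if_neg hs] at he
            have hmem2 : x ∈ C0 (m k) ∩ (T ∩ Q (m k)) := ⟨hj.1, hx.2⟩
            rw [he] at hmem2
            exact hmem2
      obtain ⟨j', nk', hmono', hind'⟩ := IH A' B' hInd' C' D' hcover'
      exact ⟨j'.castSucc, fun k => m (nk' k), hm_mono.comp hmono', hind'⟩

private lemma finIndep_of_isIndependentSeq {S : Type*} {A B : ℕ → Set S}
    (h : IsIndependentSeq A B) : FinIndep A B := by
  intro F ε
  obtain ⟨x, hx⟩ := h (F.sup id + 1) (fun k => ε k)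
  refine ⟨x, ?_⟩
  simp only [Set.mem_iInter] at hx ⊢
  intro n hn
  have hlt : n < F.sup id + 1 := Nat.lt_succ_of_le (Finset.le_sup (f := id) hn)
  exact hx ⟨n, hlt⟩

private lemma isIndependentSeq_of_finIndep {S : Type*} {A B : ℕ → Set S}
    (h : FinIndep A B) : IsIndependentSeq A B := by
  classical
  intro n ε
  obtain ⟨x, hx⟩ := h (Finset.range n) (fun k => if hk : k < n then ε ⟨k, hk⟩ else false)
  refine ⟨x, ?_⟩
  simp only [Set.mem_iInter] at hx ⊢
  intro k
  have := hx k (Finset.mem_range.mpr k.isLt)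
  rw [dif_pos k.isLt] at this
  simpa using this

/-- If `(A n, B n)` is an independent sequence of disjoint pairs of subsets of `S` and there
are `N` sequences of disjoint pairs `(C j n, D j n)` with
`A n ×ˢ B n ⊆ ⋃ j, C j n ×ˢ D j n` for every `n`, then for some `j₀` and some strictly
increasing `(n k)`, the sequence `(C j₀ (n k), D j₀ (n k))` is independent. -/
theorem exists_independent_subsequence_of_cover
    {S : Type*} (A B : ℕ → Set S) (hAB : ∀ n, Disjoint (A n) (B n))
    (hInd : IsIndependentSeq A B) (N : ℕ) (C D : Fin N → ℕ → Set S)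
    (hCD : ∀ j n, Disjoint (C j n) (D j n))
    (hcover : ∀ n, A n ×ˢ B n ⊆ ⋃ j : Fin N, C j n ×ˢ D j n) :
    ∃ (j₀ : Fin N) (nk : ℕ → ℕ), StrictMono nk ∧
      IsIndependentSeq (fun k => C j₀ (nk k)) (fun k => D j₀ (nk k)) := by
  obtain ⟨j₀, nk, hmono, hfin⟩ := key N A B (finIndep_of_isIndependentSeq hInd) C D hcover
  exact ⟨j₀, nk, hmono, isIndependentSeq_of_finIndep hfin⟩
end

section
/- If K is a quasi weakly Radon–Nikodým compact Hausdorff space, L is a compact Hausdorff space, and f : K → L is a continuous surjection, then L is quasi weakly Radon–Nikodým. That is, the continuous image of a QWRN compact space is QWRN. -/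
/-!
Let `i : K → [0,1]^Γ` witness that `K` is QWRN, and index the coordinates of `L` by continuous
maps `g : L → [0,1]`. By the compactness argument of the lattice Stone–Weierstrass theorem,
`g ∘ f` is uniformly `ε/4`-close to a min-max combination `⨅ i, ⨆ j, (a i j * x_(α i j) + b i j)`
of coordinates of `K` with rational coefficients. Recording the coefficients and, for each
`α i j`, a piece containing it of the QWRN decomposition of `Γ` for a gap `δ` with
`|a i j| * δ ≤ ε/4`, sorts the `g` into countably many classes.

An independent sequence with gap `ε` inside one class gives an independent sequence of pairs
`(⋃ i, ⋂ j, A i j, ⋂ i, ⋃ j, B i j)` of closed sets, where `(A i j, B i j)` are the sublevel and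
superlevel sets of the atom `(i, j)`. No atom has an independent subsequence, so by Rosenthal's
dichotomy (proved from Galvin's lemma) a common subsequence lets no point lie infinitely often in
both `A i j` and `B i j`. This passes to the finite unions and intersections by pigeonhole, while
compactness produces a point lying in the combined sets alternately: a contradiction.
-/

open Set Function

open Filter Topology

theorem Set.Infinite.inter_Ioi {α : Type*} [LinearOrder α] [LocallyFiniteOrderBot α] {M : Set α}
    (hM : M.Infinite) (a : α) : (M ∩ Ioi a).Infinite := by
  simpa [sdiff_eq, compl_Iic] using hM.sdiff (finite_Iic a)

namespace IsIndependentSeq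

variable {X : Type*} {A B A' B' : ℕ → Set X}

theorem mono (h : IsIndependentSeq A B) (hA : ∀ n, A n ⊆ A' n) (hB : ∀ n, B n ⊆ B' n) :
    IsIndependentSeq A' B' := fun n ε =>
  (h n ε).mono <| iInter_mono fun k => by split_ifs; exacts [hB k, hA k]

theorem symm (h : IsIndependentSeq A B) : IsIndependentSeq B A := fun n ε =>
  (h n fun k => !ε k).mono <| iInter_mono fun k => by cases ε k <;> rfl

theorem preimage {Y : Type*} {f : Y → X} (hf : Surjective f) (h : IsIndependentSeq A B) :
    IsIndependentSeq (fun n => f ⁻¹' A n) (fun n => f ⁻¹' B n) := fun n ε => by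
  refine ((h n ε).preimage hf).mono ?_
  rw [preimage_iInter]
  exact iInter_mono fun k => by split_ifs <;> rfl

theorem nonempty_zero (h : IsIndependentSeq A B) : (A 0).Nonempty ∧ (B 0).Nonempty :=
  ⟨(h 1 fun _ => false).mono (iInter_subset_of_subset 0 (by simp)),
    (h 1 fun _ => true).mono (iInter_subset_of_subset 0 (by simp))⟩

theorem comp_strictMono (h : IsIndependentSeq A B) {φ : ℕ → ℕ} (hφ : StrictMono φ) :
    IsIndependentSeq (A ∘ φ) (B ∘ φ) := by
  intro n ε
  let ε' : Fin (φ n) → Bool := fun j => decide (∃ k : Fin n, φ k = j ∧ ε k = true)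
  refine (h (φ n) ε').mono (subset_iInter fun k => ?_)
  have hε' : ε' ⟨φ k, hφ k.2⟩ = ε k := by
    simp [ε', hφ.injective.eq_iff, Fin.val_inj]
  exact iInter_subset_of_subset ⟨φ k, hφ k.2⟩ (by rw [hε']; rfl)

/-- By compactness, some point lies in `A n` for all even `n` and in `B n` for all odd `n`. -/
theorem exists_frequently_mem [TopologicalSpace X] [CompactSpace X] (hA : ∀ n, IsClosed (A n))
    (hB : ∀ n, IsClosed (B n)) (h : IsIndependentSeq A B) :
    ∃ x, (∃ᶠ n in atTop, x ∈ A n) ∧ ∃ᶠ n in atTop, x ∈ B n := by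
  let S : ℕ → Set X := fun n => if Even n then A n else B n
  obtain ⟨x, -, hx⟩ := isCompact_univ.inter_iInter_nonempty S
    (fun n => by unfold S; split_ifs; exacts [hA n, hB n]) fun u => by
      obtain ⟨x, hx⟩ := h (u.sup id + 1) fun k => !decide (Even (k : ℕ))
      refine ⟨x, mem_univ x, mem_iInter₂.2 fun n hn => ?_⟩
      have := mem_iInter.1 hx ⟨n, Nat.lt_succ_of_le (Finset.le_sup (f := id) hn)⟩
      by_cases hn : Even n <;> simpa [S, hn] using this
  have hx : ∀ n, x ∈ S n := mem_iInter.1 hx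
  refine ⟨x, frequently_atTop.2 fun a => ⟨2 * a, by omega, ?_⟩,
    frequently_atTop.2 fun a => ⟨2 * a + 1, by omega, ?_⟩⟩
  · simpa [S] using hx (2 * a)
  · simpa [S, Nat.not_even_iff_odd] using hx (2 * a + 1)

end IsIndependentSeq

namespace Galvin

variable (F : Set (Finset ℕ))

def Accepts (M : Set ℕ) (s : Finset ℕ) : Prop :=
  ∀ χ : ℕ → ℕ, StrictMono χ → (∀ n, χ n ∈ M) → ∃ k, s ∪ (Finset.range k).image χ ∈ F

def Rejects (M : Set ℕ) (s : Finset ℕ) : Prop :=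
  ∀ N ⊆ M, N.Infinite → ¬ Accepts F N s

variable {F} {M N : Set ℕ} {s : Finset ℕ}

theorem Accepts.mono (h : Accepts F M s) (hNM : N ⊆ M) : Accepts F N s :=
  fun χ hχ hχN => h χ hχ fun n => hNM (hχN n)

theorem Rejects.mono (h : Rejects F M s) (hNM : N ⊆ M) : Rejects F N s :=
  fun P hPN => h P (hPN.trans hNM)

theorem Rejects.notMem (h : Rejects F M s) (hM : M.Infinite) : s ∉ F :=
  fun hs => h M subset_rfl hM fun _ _ _ => ⟨0, by simpa using hs⟩

theorem accepts_range {b : ℕ → ℕ} (hb : StrictMono b) {Ns : ℕ → Set ℕ} (hNs : Antitone Ns)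
    (hbNs : ∀ k, b k ∈ Ns k) (hacc : ∀ k, Accepts F (Ns (k + 1)) (insert (b k) s)) :
    Accepts F (range b) s := by
  intro χ hχ hχb
  obtain ⟨k₀, hk₀⟩ := hχb 0
  have htail : ∀ n, χ (n + 1) ∈ Ns (k₀ + 1) := fun n => by
    obtain ⟨l, hl⟩ := hχb (n + 1)
    have : k₀ < l := hb.lt_iff_lt.1 (by rw [hk₀, hl]; exact hχ n.succ_pos)
    exact hNs this (hl ▸ hbNs l)
  obtain ⟨k, hk⟩ := hacc k₀ (χ ∘ Nat.succ) (hχ.comp fun _ _ => Nat.succ_lt_succ) htail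
  refine ⟨k + 1, ?_⟩
  rwa [Finset.range_add_one', Finset.image_insert, Finset.map_eq_image, Finset.image_image,
    Finset.union_insert, ← Finset.insert_union, ← hk₀]

theorem exists_rejects_insert (hM : M.Infinite) (h : Rejects F M s) :
    ∃ N ⊆ M, N.Infinite ∧ ∀ a ∈ N, Rejects F N (insert a s) := by
  by_contra! hcon
  have key : ∀ N, N ⊆ M → N.Infinite →
      ∃ a ∈ N, ∃ N' ⊆ N, N'.Infinite ∧ Accepts F N' (insert a s) := by
    intro N hNM hN
    obtain ⟨a, ha, hrej⟩ := hcon N hNM hN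
    simp only [Rejects, not_forall, not_not] at hrej
    obtain ⟨N', hN'N, hN', hacc⟩ := hrej
    exact ⟨a, ha, N', hN'N, hN', hacc⟩
  choose! a haN N' hN'N hN' hacc using key
  let Ns : ℕ → Set ℕ := fun k => (fun N => N' N ∩ Ioi (a N))^[k] M
  have hNs_succ : ∀ k, Ns (k + 1) = N' (Ns k) ∩ Ioi (a (Ns k)) := fun k =>
    iterate_succ_apply' _ _ _
  have hNs : ∀ k, Ns k ⊆ M ∧ (Ns k).Infinite := by
    intro k
    induction k with
    | zero => exact ⟨subset_rfl, hM⟩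
    | succ k ih =>
      rw [hNs_succ]
      exact ⟨inter_subset_left.trans ((hN'N _ ih.1 ih.2).trans ih.1),
        (hN' _ ih.1 ih.2).inter_Ioi _⟩
  have hNs_sub : ∀ k, Ns (k + 1) ⊆ N' (Ns k) := fun k => hNs_succ k ▸ inter_subset_left
  have hbNs : ∀ k, a (Ns k) ∈ Ns k := fun k => haN _ (hNs k).1 (hNs k).2
  have hb : StrictMono fun k => a (Ns k) := strictMono_nat_of_lt_succ fun k => by
    have h := hbNs (k + 1)
    rw [hNs_succ] at h ⊢
    exact h.2
  refine h _ (range_subset_iff.2 fun k => (hNs k).1 (hbNs k))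
    (infinite_range_of_injective hb.injective) (accepts_range hb ?_ hbNs fun k =>
      (hacc _ (hNs k).1 (hNs k).2).mono (hNs_sub k))
  exact antitone_nat_of_succ_le fun k => (hNs_sub k).trans (hN'N _ (hNs k).1 (hNs k).2)

theorem exists_rejects_insert_of_finset (hM : M.Infinite) (S : Finset (Finset ℕ))
    (h : ∀ s ∈ S, Rejects F M s) :
    ∃ N ⊆ M, N.Infinite ∧ ∀ s ∈ S, ∀ a ∈ N, Rejects F N (insert a s) := by
  classical
  induction S using Finset.induction_on generalizing M with
  | empty => exact ⟨M, subset_rfl, hM, by simp⟩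
  | insert s S _ ih =>
    obtain ⟨N, hNM, hN, hNS⟩ := ih hM fun t ht => h t (Finset.mem_insert_of_mem ht)
    obtain ⟨P, hPN, hP, hPs⟩ :=
      exists_rejects_insert hN ((h s (Finset.mem_insert_self s S)).mono hNM)
    refine ⟨P, hPN.trans hNM, hP, fun t ht a ha => ?_⟩
    rcases Finset.mem_insert.1 ht with rfl | ht
    · exact hPs a ha
    · exact (hNS t ht a (hPN ha)).mono hPN

theorem exists_rejects_subset_insert (hM : M.Infinite) {A : Finset ℕ}
    (h : ∀ s ⊆ A, Rejects F M s) :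
    ∃ a ∈ M, ∃ N ⊆ M ∩ Ioi a, N.Infinite ∧ ∀ s ⊆ insert a A, Rejects F N s := by
  classical
  obtain ⟨N, hNM, hN, hNrej⟩ := exists_rejects_insert_of_finset hM A.powerset
    fun s hs => h s (Finset.mem_powerset.1 hs)
  obtain ⟨a, ha⟩ := hN.nonempty
  refine ⟨a, hNM ha, N ∩ Ioi a, inter_subset_inter_left _ hNM, hN.inter_Ioi a, fun s hs => ?_⟩
  by_cases has : a ∈ s
  · rw [← Finset.insert_erase has]
    exact (hNrej _ (Finset.mem_powerset.2 (Finset.subset_insert_iff.1 hs)) a ha).mono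
      inter_subset_left
  · exact (h s ((Finset.subset_insert_iff_of_notMem has).1 hs)).mono
      (inter_subset_left.trans hNM)

/-- Galvin's lemma. -/
theorem exists_forall_notMem_or_accepts {M₀ : Set ℕ} (h₀ : M₀.Infinite) :
    ∃ M ⊆ M₀, M.Infinite ∧ ((∀ s : Finset ℕ, ↑s ⊆ M → s ∉ F) ∨ Accepts F M ∅) := by
  by_cases hacc : ∃ M ⊆ M₀, M.Infinite ∧ Accepts F M ∅
  · obtain ⟨M, hM₀, hM, hacc⟩ := hacc
    exact ⟨M, hM₀, hM, Or.inr hacc⟩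
  -- fusion along states `(A, M)` such that `M` rejects every subset of `A`
  choose! a ha N hN hNinf hNrej using fun (st : Finset ℕ × Set ℕ) (hM : st.2.Infinite)
    (h : ∀ s ⊆ st.1, Rejects F st.2 s) => exists_rejects_subset_insert hM h
  let st : ℕ → Finset ℕ × Set ℕ := fun k => (fun st => (insert (a st) st.1, N st))^[k] (∅, M₀)
  have hst_succ : ∀ k, st (k + 1) = (insert (a (st k)) (st k).1, N (st k)) := fun k =>
    iterate_succ_apply' _ _ _
  have hst : ∀ k, (st k).2 ⊆ M₀ ∧ (st k).2.Infinite ∧ ∀ s ⊆ (st k).1, Rejects F (st k).2 s := by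
    intro k
    induction k with
    | zero => exact ⟨subset_rfl, h₀, fun s hs M hM₀ hM hMacc => by
        rw [Finset.subset_empty.1 hs] at hMacc
        exact hacc ⟨M, hM₀, hM, hMacc⟩⟩
    | succ k ih =>
      rw [hst_succ]
      exact ⟨((hN _ ih.2.1 ih.2.2).trans inter_subset_left).trans ih.1,
        hNinf _ ih.2.1 ih.2.2, hNrej _ ih.2.1 ih.2.2⟩
  have hb : StrictMono fun k => a (st k) := strictMono_nat_of_lt_succ fun k => by
    have h := ha _ (hst (k + 1)).2.1 (hst (k + 1)).2.2
    rw [hst_succ] at h ⊢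
    exact (hN _ (hst k).2.1 (hst k).2.2 h).2
  have hA : ∀ k, (st k).1 = (Finset.range k).image fun k => a (st k) := by
    intro k
    induction k with
    | zero => rfl
    | succ k ih => rw [hst_succ, Finset.range_add_one, Finset.image_insert, ← ih]
  refine ⟨range fun k => a (st k),
    range_subset_iff.2 fun k => (hst k).1 (ha _ (hst k).2.1 (hst k).2.2),
    infinite_range_of_injective hb.injective, Or.inl fun s hs => ?_⟩
  have hsA : s ⊆ (st (s.sup id + 1)).1 := by
    intro m hm
    obtain ⟨j, rfl⟩ := hs hm
    rw [hA, Finset.mem_image]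
    exact ⟨j, Finset.mem_range.2 (Nat.lt_succ_of_le ((hb.id_le j).trans
      (Finset.le_sup (f := id) hm))), rfl⟩
  exact ((hst _).2.2 s hsA).notMem (hst _).2.1

end Galvin

section Rosenthal

variable {X : Type*}

def NoOscillation (A B : ℕ → Set X) : Prop :=
  ∀ x, ¬ ((∃ᶠ n in atTop, x ∈ A n) ∧ ∃ᶠ n in atTop, x ∈ B n)

theorem NoOscillation.comp_strictMono {A B : ℕ → Set X} (h : NoOscillation A B) {φ : ℕ → ℕ}
    (hφ : StrictMono φ) : NoOscillation (A ∘ φ) (B ∘ φ) := fun x hx =>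
  h x ⟨hφ.tendsto_atTop.frequently hx.1, hφ.tendsto_atTop.frequently hx.2⟩

theorem NoOscillation.iUnion_iInter {ι : Type*} [Finite ι] {κ : ι → Type*} [∀ i, Finite (κ i)]
    {A B : ∀ i, κ i → ℕ → Set X} (h : ∀ i j, NoOscillation (A i j) (B i j)) :
    NoOscillation (fun n => ⋃ i, ⋂ j, A i j n) (fun n => ⋂ i, ⋃ j, B i j n) := by
  rintro x ⟨hA, hB⟩
  simp only [mem_iUnion, mem_iInter] at hA hB
  obtain ⟨i, hAi⟩ := frequently_exists.1 hA
  obtain ⟨j, hBj⟩ := frequently_exists.1 (hB.mono fun n hn => hn i)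
  exact h i j x ⟨hAi.mono fun n hn => hn j, hBj⟩

/-- Some point lies alternately in `A m` and `B m` along the increasing enumeration of `s`. -/
def AltRealized (A B : ℕ → Set X) (s : Finset ℕ) : Prop :=
  ∃ x, ∀ m ∈ s, x ∈ if Even (s.filter (· < m)).card then A m else B m

theorem StrictMono.card_filter_lt_image_range {χ : ℕ → ℕ} (hχ : StrictMono χ) {j k : ℕ}
    (hj : j < k) :
    (((Finset.range k).image χ).filter (· < χ j)).card = j := by
  have : ((Finset.range k).image χ).filter (· < χ j) = (Finset.range j).image χ := by
    ext m
    simp only [Finset.mem_filter, Finset.mem_image, Finset.mem_range]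
    constructor
    · rintro ⟨⟨i, -, rfl⟩, hi⟩
      exact ⟨i, hχ.lt_iff_lt.1 hi, rfl⟩
    · rintro ⟨i, hi, rfl⟩
      exact ⟨⟨i, hi.trans hj, rfl⟩, hχ hi⟩
  rw [this, Finset.card_image_of_injective _ hχ.injective, Finset.card_range]

theorem Finset.exists_subset_insert_even_card_iff {α : Type*} [DecidableEq α] {s : Finset α}
    {c : α} (hc : c ∉ s) (P : Prop) : ∃ t, s ⊆ t ∧ t ⊆ insert c s ∧ (Even t.card ↔ P) := by
  by_cases h : Even s.card ↔ P
  · exact ⟨s, subset_rfl, Finset.subset_insert _ _, h⟩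
  · refine ⟨insert c s, Finset.subset_insert _ _, subset_rfl, ?_⟩
    rw [Finset.card_insert_of_notMem hc, Nat.even_add_one]
    tauto

/-- Inserting the even-indexed terms `φ (2 * k)` where needed, any parities can be prescribed
to the positions of the odd-indexed terms `φ (2 * k + 1)`. -/
theorem exists_finset_even_card_filter_iff {φ : ℕ → ℕ} (hφ : StrictMono φ) (ε : ℕ → Bool)
    (n : ℕ) : ∃ s ⊆ (Finset.range (2 * n)).image φ,
      ∀ k < n, φ (2 * k + 1) ∈ s ∧ (Even (s.filter (· < φ (2 * k + 1))).card ↔ ε k = false) := by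
  induction n with
  | zero => exact ⟨∅, by simp, by simp⟩
  | succ n ih =>
    obtain ⟨s, hsφ, hs⟩ := ih
    have hφ_mem : ∀ {j l}, j < l → φ j ∈ (Finset.range l).image φ := fun hjl =>
      Finset.mem_image_of_mem _ (Finset.mem_range.2 hjl)
    have hsub : ∀ {l}, 2 * n ≤ l → s ⊆ (Finset.range l).image φ := fun hl =>
      hsφ.trans (Finset.image_subset_image (Finset.range_subset_range.2 hl))
    obtain ⟨t, hst, hts, ht⟩ := Finset.exists_subset_insert_even_card_iff
      (c := φ (2 * n)) (fun h => by
        obtain ⟨j, hj, hjφ⟩ := Finset.mem_image.1 (hsφ h)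
        exact (Finset.mem_range.1 hj).ne (hφ.injective hjφ)) (ε n = false)
    have htφ : t ⊆ (Finset.range (2 * n + 1)).image φ :=
      hts.trans (Finset.insert_subset (hφ_mem (by omega)) (hsub (by omega)))
    refine ⟨insert (φ (2 * n + 1)) t, Finset.insert_subset (hφ_mem (by omega))
      (htφ.trans (Finset.image_subset_image (Finset.range_subset_range.2 (by omega)))),
      fun k hk => ⟨?_, ?_⟩⟩
    · rcases (Nat.lt_succ_iff.1 hk).lt_or_eq with hk | rfl
      · exact Finset.mem_insert_of_mem (hst (hs k hk).1)
      · exact Finset.mem_insert_self _ _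
    rw [Finset.filter_insert, if_neg (not_lt.2 (hφ.monotone (by omega)))]
    rcases (Nat.lt_succ_iff.1 hk).lt_or_eq with hk | rfl
    · have : t.filter (· < φ (2 * k + 1)) = s.filter (· < φ (2 * k + 1)) := by
        ext m
        simp only [Finset.mem_filter]
        refine ⟨fun ⟨hm, hlt⟩ => ⟨?_, hlt⟩, fun ⟨hm, hlt⟩ => ⟨hst hm, hlt⟩⟩
        rcases Finset.mem_insert.1 (hts hm) with rfl | hm
        exacts [absurd hlt (not_lt.2 (hφ.monotone (by omega))), hm]
      rw [this]
      exact (hs k hk).2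
    · rwa [Finset.filter_true_of_mem fun m hm => by
        obtain ⟨j, hj, rfl⟩ := Finset.mem_image.1 (htφ hm)
        exact hφ (Finset.mem_range.1 hj)]

/-- Rosenthal's dichotomy. -/
theorem exists_strictMono_noOscillation (A B : ℕ → Set X)
    (h : ∀ φ : ℕ → ℕ, StrictMono φ → ¬ IsIndependentSeq (A ∘ φ) (B ∘ φ)) :
    ∃ φ : ℕ → ℕ, StrictMono φ ∧ NoOscillation (A ∘ φ) (B ∘ φ) := by
  obtain ⟨M, -, hM, hMF | hMacc⟩ :=
    Galvin.exists_forall_notMem_or_accepts (F := {s | ¬ AltRealized A B s}) infinite_univ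
  all_goals
    have hφ : StrictMono (Nat.nth (· ∈ M)) := Nat.nth_strictMono hM
    have hφM : range (Nat.nth (· ∈ M)) = M := Nat.range_nth_of_infinite hM
    set φ := Nat.nth (· ∈ M)
  · refine (h (fun k => φ (2 * k + 1)) (hφ.comp fun a b hab => by omega) fun n ε => ?_).elim
    obtain ⟨s, hsφ, hs⟩ := exists_finset_even_card_filter_iff hφ
      (fun k => if hk : k < n then ε ⟨k, hk⟩ else false) n
    obtain ⟨x, hx⟩ := not_not.1 (hMF s fun m hm => by
      obtain ⟨j, -, rfl⟩ := Finset.mem_image.1 (hsφ hm)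
      exact hφM ▸ mem_range_self j)
    refine ⟨x, mem_iInter.2 fun k => ?_⟩
    have hxk := hx _ (hs k k.2).1
    have hpar := (hs k k.2).2
    simp only [k.2, dite_true] at hpar
    cases hε : ε k <;> simp_all
  · refine ⟨φ, hφ, fun x ⟨hA, hB⟩ => ?_⟩
    obtain ⟨ψ, hψ, hx⟩ := extraction_forall_of_frequently
      (P := fun j k => x ∈ if Even j then A (φ k) else B (φ k))
      fun j => by split_ifs; exacts [hA, hB]
    obtain ⟨k, hk⟩ := hMacc (φ ∘ ψ) (hφ.comp hψ) fun n => hφM ▸ mem_range_self _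
    refine hk ⟨x, fun m hm => ?_⟩
    rw [Finset.empty_union] at hm ⊢
    obtain ⟨j, hj, rfl⟩ := Finset.mem_image.1 hm
    rw [(hφ.comp hψ).card_filter_lt_image_range (Finset.mem_range.1 hj)]
    exact hx j

theorem exists_strictMono_forall_noOscillation {ι : Type*} [Finite ι] (A B : ι → ℕ → Set X)
    (h : ∀ i (φ : ℕ → ℕ), StrictMono φ → ¬ IsIndependentSeq (A i ∘ φ) (B i ∘ φ)) :
    ∃ φ : ℕ → ℕ, StrictMono φ ∧ ∀ i, NoOscillation (A i ∘ φ) (B i ∘ φ) := by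
  classical
  cases nonempty_fintype ι
  suffices ∀ S : Finset ι, ∃ φ : ℕ → ℕ, StrictMono φ ∧ ∀ i ∈ S, NoOscillation (A i ∘ φ) (B i ∘ φ)
    by simpa using this Finset.univ
  intro S
  induction S using Finset.induction_on with
  | empty => exact ⟨id, strictMono_id, by simp⟩
  | insert i S _ ih =>
    obtain ⟨φ, hφ, hS⟩ := ih
    obtain ⟨ψ, hψ, hi⟩ := exists_strictMono_noOscillation (A i ∘ φ) (B i ∘ φ)
      fun ψ hψ => h i (φ ∘ ψ) (hφ.comp hψ)
    refine ⟨φ ∘ ψ, hφ.comp hψ, fun j hj => ?_⟩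
    rcases Finset.mem_insert.1 hj with rfl | hj
    exacts [hi, (hS j hj).comp_strictMono hψ]

theorem not_isIndependentSeq_iUnion_iInter [TopologicalSpace X] [CompactSpace X]
    {ι : Type*} [Finite ι] {κ : ι → Type*} [∀ i, Finite (κ i)] {A B : ∀ i, κ i → ℕ → Set X}
    (hA : ∀ i j n, IsClosed (A i j n)) (hB : ∀ i j n, IsClosed (B i j n))
    (h : ∀ i j (φ : ℕ → ℕ), StrictMono φ → ¬ IsIndependentSeq (A i j ∘ φ) (B i j ∘ φ)) :
    ¬ IsIndependentSeq (fun n => ⋃ i, ⋂ j, A i j n) (fun n => ⋂ i, ⋃ j, B i j n) := by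
  intro hind
  obtain ⟨φ, hφ, hosc⟩ := exists_strictMono_forall_noOscillation
    (fun s : Σ i, κ i => A s.1 s.2) (fun s => B s.1 s.2) fun s => h s.1 s.2
  obtain ⟨x, hx⟩ := (hind.comp_strictMono hφ).exists_frequently_mem
    (fun n => isClosed_iUnion_of_finite fun i => isClosed_iInter fun j => hA i j _)
    (fun n => isClosed_iInter fun i => isClosed_iUnion_of_finite fun j => hB i j _)
  exact NoOscillation.iUnion_iInter (fun i j => hosc ⟨i, j⟩) x hx

end Rosenthal

section Tame

variable {X Γ : Type*}

def IsTameOn (g : Γ → X → ℝ) (ε : ℝ) (S : Set Γ) : Prop :=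
  ∀ p q : ℝ, q - p > ε → ¬ ∃ φ : ℕ → Γ, (∀ m, φ m ∈ S) ∧
    IsIndependentSeq (fun m => {x | g (φ m) x < p}) (fun m => {x | g (φ m) x > q})

/-- `IsQWRN K` unfolds to `∃ Γ i, IsEmbedding i ∧ HasCountableTameCover fun γ x => (i x γ : ℝ)`. -/
def HasCountableTameCover (g : Γ → X → ℝ) : Prop :=
  ∀ ε : ℝ, ε > 0 → ∃ Γs : ℕ → Set Γ, (⋃ n, Γs n) = univ ∧ ∀ n, IsTameOn g ε (Γs n)

variable {g : Γ → X → ℝ} {δ : ℝ} {S : Set Γ} {φ : ℕ → Γ}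

theorem IsTameOn.not_isIndependentSeq_le (hS : IsTameOn g δ S) (hφ : ∀ m, φ m ∈ S) {s s' : ℝ}
    (hss' : δ < s' - s) :
    ¬ IsIndependentSeq (fun m => {x | g (φ m) x ≤ s}) (fun m => {x | s' ≤ g (φ m) x}) :=
  fun hind => hS (s + (s' - s - δ) / 3) (s' - (s' - s - δ) / 3) (by linarith)
    ⟨φ, hφ, hind.mono (fun _ _ hx => by simp only [mem_ofPred_eq] at hx ⊢; linarith)
      fun _ _ hx => by simp only [mem_ofPred_eq] at hx ⊢; linarith⟩

theorem IsTameOn.not_isIndependentSeq_affine (hS : IsTameOn g δ S) (hφ : ∀ m, φ m ∈ S)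
    {a b p q : ℝ} (hgap : |a| * δ < q - p) :
    ¬ IsIndependentSeq (fun m => {x | a * g (φ m) x + b ≤ p})
      (fun m => {x | q ≤ a * g (φ m) x + b}) := by
  intro hind
  rcases lt_trichotomy a 0 with ha | rfl | ha
  · rw [abs_of_neg ha] at hgap
    refine hS.not_isIndependentSeq_le hφ (s := (q - b) / a) (s' := (p - b) / a) ?_
      (hind.symm.mono (fun _ _ hx => ?_) fun _ _ hx => ?_)
    · rw [← sub_div, lt_div_iff_of_neg ha]
      linarith
    · simp only [mem_ofPred_eq] at hx ⊢
      rw [le_div_iff_of_neg ha]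
      linarith
    · simp only [mem_ofPred_eq] at hx ⊢
      rw [div_le_iff_of_neg ha]
      linarith
  · obtain ⟨⟨x, hx⟩, y, hy⟩ := hind.nonempty_zero
    simp only [mem_ofPred_eq, zero_mul, zero_add] at hx hy
    simp only [abs_zero, zero_mul] at hgap
    linarith
  · rw [abs_of_pos ha] at hgap
    refine hS.not_isIndependentSeq_le hφ (s := (p - b) / a) (s' := (q - b) / a) ?_
      (hind.mono (fun _ _ hx => ?_) fun _ _ hx => ?_)
    · rw [← sub_div, lt_div_iff₀ ha]
      linarith
    · simp only [mem_ofPred_eq] at hx ⊢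
      rw [le_div_iff₀ ha]
      linarith
    · simp only [mem_ofPred_eq] at hx ⊢
      rw [div_le_iff₀ ha]
      linarith

end Tame

section Approximation

def infSup {α ι : Type*} [LinearOrder α] [Fintype ι] [Nonempty ι] {κ : ι → Type*}
    [∀ i, Fintype (κ i)] [∀ i, Nonempty (κ i)] (v : ∀ i, κ i → α) : α :=
  Finset.univ.inf' Finset.univ_nonempty fun i => Finset.univ.sup' Finset.univ_nonempty (v i)

theorem exists_rat_affine_near {u v U V η : ℝ} (hη : 0 < η) (h : u ≠ v ∨ U = V) :
    ∃ a b : ℚ, |a * u + b - U| < η ∧ |a * v + b - V| < η := by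
  obtain ⟨a₀, b₀, hu, hv⟩ : ∃ a b : ℝ, a * u + b = U ∧ a * v + b = V := by
    rcases h with huv | rfl
    · refine ⟨(U - V) / (u - v), U - (U - V) / (u - v) * u, by ring, ?_⟩
      field_simp [sub_ne_zero.2 huv]
      ring
    · exact ⟨0, U, by ring, by ring⟩
  have hopen : IsOpen {c : ℝ × ℝ | |c.1 * u + c.2 - U| < η ∧ |c.1 * v + c.2 - V| < η} :=
    (isOpen_lt (by fun_prop) continuous_const).and (isOpen_lt (by fun_prop) continuous_const)
  obtain ⟨⟨a, b⟩, hab⟩ := (Rat.denseRange_cast.prodMap Rat.denseRange_cast).exists_mem_open hopen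
    ⟨(a₀, b₀), by simp [hu, hv, hη]⟩
  exact ⟨a, b, hab⟩

theorem CompactSpace.exists_fin_cover {K : Type*} [TopologicalSpace K] [CompactSpace K]
    [Nonempty K] {U : K → Set K} (hU : ∀ x, U x ∈ 𝓝 x) :
    ∃ (n : ℕ) (y : Fin (n + 1) → K), ∀ z, ∃ i, z ∈ U (y i) := by
  obtain ⟨s, hs⟩ := CompactSpace.elim_nhds_subcover U hU
  refine ⟨s.card, Fin.cons (Classical.arbitrary K) fun j => s.equivFin.symm j, fun z => ?_⟩
  obtain ⟨x, hx, hzx⟩ := mem_iUnion₂.1 (hs ▸ mem_univ z : z ∈ ⋃ x ∈ s, U x)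
  exact ⟨(s.equivFin ⟨x, hx⟩).succ, by simpa using hzx⟩

/-- The compactness argument of the lattice Stone–Weierstrass theorem. -/
theorem exists_infSup_near {K ι : Type*} [TopologicalSpace K] [CompactSpace K] [Nonempty K]
    {h : ι → K → ℝ} (hh : ∀ k, Continuous (h k)) {G : K → ℝ} (hG : Continuous G) {η : ℝ}
    (h₂ : ∀ x y, ∃ k, |h k x - G x| < η ∧ |h k y - G y| < η) :
    ∃ (r : ℕ) (c : Fin (r + 1) → ℕ) (k : ∀ i, Fin (c i + 1) → ι),
      ∀ x, |G x - infSup fun i j => h (k i j) x| < η := by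
  choose k₀ hk₀x hk₀y using h₂
  have hrow : ∀ x, ∃ (n : ℕ) (y : Fin (n + 1) → K), ∀ z, ∃ j, G z - η < h (k₀ x (y j)) z :=
    fun x => CompactSpace.exists_fin_cover (U := fun y => {z | G z - η < h (k₀ x y) z})
      fun y => (isOpen_lt (by fun_prop) (hh _)).mem_nhds (by
        have := abs_lt.1 (hk₀y x y)
        simp only [mem_ofPred_eq]
        linarith)
  choose n y hy using hrow
  let R : K → K → ℝ := fun x z => Finset.univ.sup' Finset.univ_nonempty fun j => h (k₀ x (y x j)) z
  obtain ⟨r, X, hX⟩ := CompactSpace.exists_fin_cover (U := fun x => {z | R x z < G z + η})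
    fun x => (isOpen_lt (Continuous.finset_sup'_apply _ fun j _ => hh _) (hG.add_const η)).mem_nhds
      (by simpa [R, Finset.sup'_lt_iff, sub_lt_iff_lt_add'] using
        fun j => (abs_lt.1 (hk₀x x (y x j))).2)
  refine ⟨r, fun i => n (X i), fun i j => k₀ (X i) (y (X i) j), fun z => abs_lt.2 ⟨?_, ?_⟩⟩
  · obtain ⟨i, hi⟩ := hX z
    have : infSup (fun i j => h (k₀ (X i) (y (X i) j)) z) < G z + η :=
      (Finset.inf'_le _ (Finset.mem_univ i)).trans_lt hi
    linarith
  · have : G z - η < infSup fun i j => h (k₀ (X i) (y (X i) j)) z := by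
      simpa [infSup, Finset.lt_inf'_iff, Finset.lt_sup'_iff] using fun i => hy (X i) z
    linarith

end Approximation

section Transfer

variable {X Γ Γ' : Type*}

theorem hasCountableTameCover_of_subsingleton [Subsingleton X] (g : Γ → X → ℝ) :
    HasCountableTameCover g := fun ε hε =>
  ⟨fun _ => univ, iUnion_const _, fun _ p q hpq ⟨φ, _, hind⟩ => by
    obtain ⟨⟨x, hx⟩, y, hy⟩ := hind.nonempty_zero
    rw [Subsingleton.elim x y] at hx
    simp only [mem_ofPred_eq] at hx hy
    linarith⟩

theorem HasCountableTameCover.of_comp {Y : Type*} {f : X → Y} (hf : Surjective f)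
    {g : Γ → Y → ℝ} (h : HasCountableTameCover fun γ x => g γ (f x)) :
    HasCountableTameCover g := fun ε hε => by
  obtain ⟨Γs, hcov, htame⟩ := h ε hε
  exact ⟨Γs, hcov, fun n p q hpq ⟨φ, hφ, hind⟩ => htame n p q hpq ⟨φ, hφ, hind.preimage hf⟩⟩

variable {t : Γ → X → ℝ}

theorem exists_rat_affine_coord_near [Nonempty Γ] (hsep : Injective fun x γ => t γ x)
    (G : X → ℝ) {η : ℝ} (hη : 0 < η) (x y : X) :
    ∃ k : ℚ × ℚ × Γ, |k.1 * t k.2.2 x + k.2.1 - G x| < η ∧ |k.1 * t k.2.2 y + k.2.1 - G y| < η := by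
  obtain ⟨γ, hγ⟩ : ∃ γ, t γ x ≠ t γ y ∨ G x = G y := by
    by_cases hxy : x = y
    · exact ⟨Classical.arbitrary Γ, Or.inr (hxy ▸ rfl)⟩
    · obtain ⟨γ, hγ⟩ := Function.ne_iff.1 (hsep.ne hxy)
      exact ⟨γ, Or.inl hγ⟩
  obtain ⟨a, b, hab⟩ := exists_rat_affine_near hη hγ
  exact ⟨(a, b, γ), hab⟩

variable [TopologicalSpace X] [CompactSpace X]

theorem isTameOn_of_forall_near_infSup (ht : ∀ γ, Continuous (t γ)) {ι : Type*} [Fintype ι]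
    [Nonempty ι] {κ : ι → Type*} [∀ i, Fintype (κ i)] [∀ i, Nonempty (κ i)]
    {a b δ : ∀ i, κ i → ℝ} {P : ∀ i, κ i → Set Γ} (hP : ∀ i j, IsTameOn t (δ i j) (P i j))
    {ε η : ℝ} (hε : ∀ i j, 2 * η + |a i j| * δ i j ≤ ε) {G : Γ' → X → ℝ} {S : Set Γ'}
    (hS : ∀ u ∈ S, ∃ α : ∀ i, κ i → Γ, (∀ i j, α i j ∈ P i j) ∧
      ∀ x, |G u x - infSup fun i j => a i j * t (α i j) x + b i j| < η) :
    IsTameOn G ε S := by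
  rintro p q hpq ⟨φ, hφS, hind⟩
  choose α hαP hα using fun m => hS (φ m) (hφS m)
  refine not_isIndependentSeq_iUnion_iInter
    (A := fun i j m => {x | a i j * t (α m i j) x + b i j ≤ p + η})
    (B := fun i j m => {x | q - η ≤ a i j * t (α m i j) x + b i j})
    (fun i j m => isClosed_le (by fun_prop) continuous_const)
    (fun i j m => isClosed_le continuous_const (by fun_prop))
    (fun i j ψ _ => (hP i j).not_isIndependentSeq_affine (fun m => hαP (ψ m) i j)
      (by linarith [hε i j]))
    (hind.mono (fun m x hx => ?_) fun m x hx => ?_)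
  · have hlt := (abs_lt.1 (hα m x)).1
    simp only [mem_ofPred_eq] at hx
    have : infSup (fun i j => a i j * t (α m i j) x + b i j) ≤ p + η := by linarith
    simpa [infSup, Finset.inf'_le_iff, Finset.sup'_le_iff] using this
  · have hlt := (abs_lt.1 (hα m x)).2
    simp only [mem_ofPred_eq] at hx
    have : q - η ≤ infSup (fun i j => a i j * t (α m i j) x + b i j) := by linarith
    simpa [infSup, Finset.le_inf'_iff, Finset.le_sup'_iff] using this

/-- Codes of min-max expressions `⨅ i, ⨆ j, (a i j * t (α i j) + b i j)` with rational
coefficients; an atom `(a, b, n)` also names the piece `n` of a tame cover containing `α i j`. -/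
abbrev MinMaxCode : Type := Σ r : ℕ, Σ c : Fin (r + 1) → ℕ, ∀ i, Fin (c i + 1) → ℚ × ℚ × ℕ

theorem HasCountableTameCover.of_continuous (ht : ∀ γ, Continuous (t γ))
    (hsep : Injective fun x γ => t γ x) (htame : HasCountableTameCover t) {G : Γ' → X → ℝ}
    (hG : ∀ u, Continuous (G u)) : HasCountableTameCover G := by
  rcases subsingleton_or_nontrivial X with hX | hX
  · exact hasCountableTameCover_of_subsingleton G
  obtain ⟨x₀, x₁, hx⟩ := exists_pair_ne X
  have : Nonempty Γ := by
    by_contra hΓ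
    exact hx (hsep (funext fun γ => (hΓ ⟨γ⟩).elim))
  intro ε hε
  choose! Γs hcover hΓs using htame
  -- an atom of slope `a` takes its coordinate from a `δ a`-tame piece, so that `|a| * δ a ≤ ε / 4`
  let δ : ℚ → ℝ := fun a => ε / (4 * (|(a : ℝ)| + 1))
  have hδ : ∀ a, 0 < δ a := fun a => by positivity
  have hδa : ∀ a : ℚ, |(a : ℝ)| * δ a ≤ ε / 4 := fun a => by
    rw [mul_div_assoc', div_le_div_iff₀ (by positivity) (by norm_num)]
    nlinarith [abs_nonneg (a : ℝ)]
  let Class : MinMaxCode → Set Γ' := fun c => {u | ∃ α : ∀ i, Fin (c.2.1 i + 1) → Γ,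
    (∀ i j, α i j ∈ Γs (δ (c.2.2 i j).1) (c.2.2 i j).2.2) ∧
      ∀ x, |G u x - infSup fun i j => ((c.2.2 i j).1 : ℝ) * t (α i j) x + (c.2.2 i j).2.1| < ε / 4}
  obtain ⟨e, he⟩ := exists_surjective_nat MinMaxCode
  refine ⟨Class ∘ e, ?_, fun n => isTameOn_of_forall_near_infSup ht
    (fun i j => hΓs _ (hδ _) _) (fun i j => by linarith [hδa ((e n).2.2 i j).1]) fun u hu => hu⟩
  change ⋃ n, Class (e n) = univ
  rw [he.iUnion_comp Class, eq_univ_iff_forall]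
  intro u
  obtain ⟨r, c, k, hk⟩ := exists_infSup_near
    (h := fun k : ℚ × ℚ × Γ => fun x => (k.1 : ℝ) * t k.2.2 x + k.2.1) (fun _ => by fun_prop)
    (hG u) (exists_rat_affine_coord_near hsep (G u) (by positivity : 0 < ε / 4))
  have hpiece : ∀ i j, ∃ m, (k i j).2.2 ∈ Γs (δ (k i j).1) m := fun i j =>
    mem_iUnion.1 ((hcover _ (hδ _)).symm ▸ mem_univ _)
  choose m hm using hpiece
  exact mem_iUnion.2 ⟨⟨r, c, fun i j => ((k i j).1, (k i j).2.1, m i j)⟩, fun i j => (k i j).2.2,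
    hm, hk⟩

end Transfer

theorem isEmbedding_eval_of_injective {L Y : Type*} [TopologicalSpace L] [CompactSpace L]
    [T2Space L] {e : L → Y} (he : Injective e) :
    IsEmbedding fun y (u : {u : Y → unitInterval // Continuous (u ∘ e)}) => u.1 (e y) := by
  refine (Continuous.isClosedEmbedding (continuous_pi fun u => u.2) fun y₁ y₂ hy => ?_).isEmbedding
  by_contra hne
  obtain ⟨g, hg, hg₁, hg₂⟩ :=
    CompletelyRegularSpace.completely_regular y₁ {y₂} isClosed_singleton hne
  have hge : extend e g 0 ∘ e = g := funext fun y => he.extend_apply g 0 y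
  have := congrFun hy ⟨extend e g 0, hge.symm ▸ hg⟩
  simp only [he.extend_apply] at this
  rw [hg₁, hg₂ rfl] at this
  exact zero_ne_one this

theorem isQWRN_of_continuous_surjection_general
    {K L : Type*} [TopologicalSpace K] [TopologicalSpace L]
    [CompactSpace K] [CompactSpace L] [T2Space L]
    (f : K → L) (hf : Continuous f) (hsurj : Function.Surjective f)
    (hK : IsQWRN K) : IsQWRN L := by
  obtain ⟨Γ, i, hi, htame : HasCountableTameCover fun γ x => (i x γ : ℝ)⟩ := hK
  let e := i ∘ surjInv hsurj
  -- `Γ'` lies in `Type` and, `e` being injective, induces every continuous map `L → [0,1]`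
  let Γ' := {u : (Γ → unitInterval) → unitInterval // Continuous (u ∘ e)}
  refine ⟨Γ', fun y u => u.1 (e y),
    isEmbedding_eval_of_injective (hi.injective.comp (injective_surjInv hsurj)), ?_⟩
  have hcoord : ∀ γ, Continuous fun x => (i x γ : ℝ) := fun γ =>
    continuous_subtype_val.comp ((continuous_apply γ).comp hi.continuous)
  have hsep : Injective fun x γ => (i x γ : ℝ) := fun x y hxy =>
    hi.injective (funext fun γ => Subtype.ext (congrFun hxy γ))
  show HasCountableTameCover fun (u : Γ') y => (u.1 (e y) : ℝ)
  exact .of_comp hsurj (htame.of_continuous hcoord hsep fun u => (u.2.comp hf).subtype_val)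

/-- The continuous image of a QWRN compact Hausdorff space is QWRN. -/
theorem isQWRN_of_continuous_surjection
    {K L : Type*} [TopologicalSpace K] [TopologicalSpace L]
    [CompactSpace K] [T2Space K] [CompactSpace L] [T2Space L]
    (f : K → L) (hf : Continuous f) (hsurj : Function.Surjective f)
    (hK : IsQWRN K) : IsQWRN L :=
  isQWRN_of_continuous_surjection_general f hf hsurj hK
end

section
/- Every weakly Radon–Nikodým compact Hausdorff space is quasi weakly Radon–Nikodým. -/
open Set Function

/-- A real Banach space `X` *contains an isomorphic copy of `ℓ¹`* if there is a bounded
linear map from `ℓ¹` into `X` which is an isomorphism onto its image, i.e. bounded below. -/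
def ContainsL1 (X : Type*) [NormedAddCommGroup X] [NormedSpace ℝ X] : Prop :=
  ∃ T : lp (fun _ : ℕ => ℝ) 1 →L[ℝ] X, ∃ c : ℝ, 0 < c ∧ ∀ v, c * ‖v‖ ≤ ‖T v‖

/-- A compact (Hausdorff) space is *weakly Radon–Nikodým* if it is homeomorphic to a
weak*-compact subset of the dual of a real Banach space not containing a copy of `ℓ¹`. -/
def IsWRN (K : Type*) [TopologicalSpace K] : Prop :=
  ∃ (X : Type) (_ : NormedAddCommGroup X) (_ : NormedSpace ℝ X) (_ : CompleteSpace X)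
    (S : Set (WeakDual ℝ X)), ¬ ContainsL1 X ∧ IsCompact S ∧ Nonempty (K ≃ₜ S)

/-!
A weak*-compact `S ⊆ X*` of a Banach space is norm bounded, say by `B` (uniform boundedness),
so the coordinates `x ↦ (1 + x (α / (‖α‖ + 1)) / B) / 2`, `α ∈ X`, embed `S` into `[0,1]^X`.
If the pairs `{x_α < p}`, `{x_α > q}` along `α = φ m` were independent, then for finitely many
scalars `a k` two points of `S` realising the sign pattern of `a` and its opposite, tested on
`∑ a k • φ' k` (with `φ' k = φ k / (‖φ k‖ + 1)`), give `(q - p) ∑ |a k| ≤ ‖∑ a k • φ' k‖`;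
so `a ↦ ∑ a m • φ' m` embeds `ℓ¹` into `X`. Hence the trivial decomposition `Γₙ = X` works
for every `ε`.
-/

theorem WeakDual.exists_pos_norm_apply_le_of_isCompact {𝕜 E : Type*} [NontriviallyNormedField 𝕜]
    [NormedAddCommGroup E] [NormedSpace 𝕜 E] [CompleteSpace E] {S : Set (WeakDual 𝕜 E)}
    (hS : IsCompact S) : ∃ B > 0, ∀ x ∈ S, ∀ v, ‖x v‖ ≤ B * ‖v‖ := by
  have hbdd := WeakDual.isBounded_iff_isVonNBounded.mpr (hS.isVonNBounded 𝕜)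
  rw [← WeakDual.isBounded_toWeakDual_preimage_iff_isBounded, isBounded_iff_forall_norm_le] at hbdd
  obtain ⟨C, hC⟩ := hbdd
  exact ⟨max C 1, by positivity, fun x hx v =>
    ContinuousLinearMap.le_of_opNorm_le _ ((hC (toStrongDual x) hx).trans (le_max_left _ _)) v⟩

namespace lp

variable {α : Type*} {E : α → Type*} [∀ i, NormedAddCommGroup (E i)]

lemma summable_norm_of_one (a : lp E 1) : Summable fun i => ‖a i‖ := by
  simpa using (lp.memℓp a).summable (by norm_num)

lemma norm_eq_tsum_norm_of_one (a : lp E 1) : ‖a‖ = ∑' i, ‖a i‖ := by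
  rw [lp.norm_eq_tsum_rpow (by norm_num)]; simp

end lp

section L1

variable {X : Type*} [NormedAddCommGroup X] [NormedSpace ℝ X]
  {φ : ℕ → X} {R : ℝ}

lemma summable_norm_smul_of_norm_le (hφ : ∀ m, ‖φ m‖ ≤ R) (a : lp (fun _ : ℕ => ℝ) 1) :
    Summable fun m => ‖a m • φ m‖ :=
  .of_nonneg_of_le (fun _ => norm_nonneg _)
    (fun m => (norm_smul_le _ _).trans (mul_le_mul_of_nonneg_left (hφ m) (norm_nonneg _)))
    ((lp.summable_norm_of_one a).mul_right R)

lemma norm_tsum_smul_le (hφ : ∀ m, ‖φ m‖ ≤ R) (a : lp (fun _ : ℕ => ℝ) 1) :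
    ‖∑' m, a m • φ m‖ ≤ R * ‖a‖ :=
  calc ‖∑' m, a m • φ m‖ ≤ ∑' m, ‖a m • φ m‖ :=
        norm_tsum_le_tsum_norm (summable_norm_smul_of_norm_le hφ a)
    _ ≤ ∑' m, ‖a m‖ * R :=
        (summable_norm_smul_of_norm_le hφ a).tsum_le_tsum
          (fun m => (norm_smul_le _ _).trans (mul_le_mul_of_nonneg_left (hφ m) (norm_nonneg _)))
          ((lp.summable_norm_of_one a).mul_right R)
    _ = R * ‖a‖ := by rw [tsum_mul_right, lp.norm_eq_tsum_norm_of_one, mul_comm]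

noncomputable def l1SeriesCLM [CompleteSpace X] (φ : ℕ → X) (hφ : ∀ m, ‖φ m‖ ≤ R) :
    lp (fun _ : ℕ => ℝ) 1 →L[ℝ] X :=
  LinearMap.mkContinuous
    { toFun a := ∑' m, a m • φ m
      map_add' a b := by
        simp only [lp.coeFn_add, Pi.add_apply, add_smul]
        exact (summable_norm_smul_of_norm_le hφ a).of_norm.tsum_add
          (summable_norm_smul_of_norm_le hφ b).of_norm
      map_smul' r a := by
        simp only [lp.coeFn_smul, Pi.smul_apply, smul_eq_mul, RingHom.id_apply, mul_smul]
        exact (summable_norm_smul_of_norm_le hφ a).of_norm.tsum_const_smul r }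
    R (norm_tsum_smul_le hφ)

lemma l1SeriesCLM_apply [CompleteSpace X] (hφ : ∀ m, ‖φ m‖ ≤ R) (a : lp (fun _ : ℕ => ℝ) 1) :
    l1SeriesCLM φ hφ a = ∑' m, a m • φ m :=
  rfl

theorem containsL1_of_le_norm_sum [CompleteSpace X] (hφ : ∀ m, ‖φ m‖ ≤ R) {c : ℝ} (hc : 0 < c)
    (h : ∀ N (a : ℕ → ℝ), c * ∑ k ∈ Finset.range N, ‖a k‖ ≤ ‖∑ k ∈ Finset.range N, a k • φ k‖) :
    ContainsL1 X := by
  refine ⟨l1SeriesCLM φ hφ, c, hc, fun a => ?_⟩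
  have hlhs : Filter.Tendsto (fun N => c * ∑ k ∈ Finset.range N, ‖a k‖) Filter.atTop
      (nhds (c * ‖a‖)) := by
    rw [lp.norm_eq_tsum_norm_of_one]
    exact ((lp.summable_norm_of_one a).hasSum.tendsto_sum_nat).const_mul c
  have hrhs : Filter.Tendsto (fun N => ‖∑ k ∈ Finset.range N, a k • φ k‖) Filter.atTop
      (nhds ‖l1SeriesCLM φ hφ a‖) := by
    rw [l1SeriesCLM_apply]
    exact (summable_norm_smul_of_norm_le hφ a).of_norm.hasSum.tendsto_sum_nat.norm
  exact le_of_tendsto_of_tendsto' hlhs hrhs (h · a)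

end L1

section Independence

variable {X : Type*} [NormedAddCommGroup X] [NormedSpace ℝ X] {K : Type*}
  {f : K → WeakDual ℝ X} {φ : ℕ → X} {p q : ℝ}

lemma exists_forall_mul_sub_le_of_isIndependentSeq
    (hind : IsIndependentSeq (fun m => {x | f x (φ m) < p}) (fun m => {x | q < f x (φ m)}))
    (N : ℕ) (a : ℕ → ℝ) :
    ∃ x y, ∀ k < N, (q - p) * ‖a k‖ ≤ a k * (f x (φ k) - f y (φ k)) := by
  obtain ⟨x, hx⟩ := hind N fun k => decide (0 ≤ a k)
  obtain ⟨y, hy⟩ := hind N fun k => decide (a k < 0)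
  refine ⟨x, y, fun k hk => ?_⟩
  have hxk := mem_iInter.mp hx ⟨k, hk⟩
  have hyk := mem_iInter.mp hy ⟨k, hk⟩
  rcases le_or_gt 0 (a k) with hak | hak
  · simp only [hak, not_lt.mpr hak, decide_true, decide_false, Bool.false_eq_true, ↓reduceIte,
      mem_ofPred_eq] at hxk hyk
    rw [Real.norm_of_nonneg hak]
    nlinarith
  · simp only [hak, not_le.mpr hak, decide_true, decide_false, Bool.false_eq_true, ↓reduceIte,
      mem_ofPred_eq] at hxk hyk
    rw [Real.norm_of_nonpos hak.le]
    nlinarith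

theorem mul_sum_norm_le_of_isIndependentSeq {B : ℝ} (hf : ∀ x v, ‖f x v‖ ≤ B * ‖v‖)
    (hind : IsIndependentSeq (fun m => {x | f x (φ m) < p}) (fun m => {x | q < f x (φ m)}))
    (N : ℕ) (a : ℕ → ℝ) :
    (q - p) * ∑ k ∈ Finset.range N, ‖a k‖ ≤ 2 * B * ‖∑ k ∈ Finset.range N, a k • φ k‖ := by
  obtain ⟨x, y, hxy⟩ := exists_forall_mul_sub_le_of_isIndependentSeq hind N a
  set v := ∑ k ∈ Finset.range N, a k • φ k
  calc (q - p) * ∑ k ∈ Finset.range N, ‖a k‖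
      ≤ ∑ k ∈ Finset.range N, a k * (f x (φ k) - f y (φ k)) := by
        rw [Finset.mul_sum]
        exact Finset.sum_le_sum fun k hk => hxy k (Finset.mem_range.mp hk)
    _ = f x v - f y v := by
        simp only [v, map_sum, map_smul, smul_eq_mul, mul_sub, Finset.sum_sub_distrib]
    _ ≤ ‖f x v‖ + ‖f y v‖ := by
        simp only [Real.norm_eq_abs]; linarith [le_abs_self (f x v), neg_abs_le (f y v)]
    _ ≤ 2 * B * ‖v‖ := by linarith [hf x v, hf y v]

theorem containsL1_of_isIndependentSeq [CompleteSpace X] {B R : ℝ} (hB : 0 < B)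
    (hf : ∀ x v, ‖f x v‖ ≤ B * ‖v‖) (hφ : ∀ m, ‖φ m‖ ≤ R) (hpq : p < q)
    (hind : IsIndependentSeq (fun m => {x | f x (φ m) < p}) (fun m => {x | q < f x (φ m)})) :
    ContainsL1 X := by
  refine containsL1_of_le_norm_sum hφ (c := (q - p) / (2 * B)) (by positivity) fun N a => ?_
  rw [div_mul_eq_mul_div, div_le_iff₀ (by positivity), mul_comm _ (2 * B)]
  exact mul_sum_norm_le_of_isIndependentSeq hf hind N a

end Independence

lemma half_one_add_div_mem_unitInterval {t B : ℝ} (hB : 0 < B) (ht : |t| ≤ B) :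
    (1 + t / B) / 2 ∈ unitInterval := by
  have := abs_le.mp ht
  constructor
  · have : -1 ≤ t / B := by rw [le_div_iff₀ hB]; linarith
    linarith
  · have : t / B ≤ 1 := by rw [div_le_iff₀ hB]; linarith
    linarith

lemma half_one_add_div_lt_iff {t B p : ℝ} (hB : 0 < B) :
    (1 + t / B) / 2 < p ↔ t < B * (2 * p - 1) := by
  rw [div_lt_iff₀ two_pos, ← lt_sub_iff_add_lt', div_lt_iff₀ hB]
  constructor <;> intro h <;> linarith

lemma lt_half_one_add_div_iff {t B q : ℝ} (hB : 0 < B) :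
    q < (1 + t / B) / 2 ↔ B * (2 * q - 1) < t := by
  rw [lt_div_iff₀ two_pos, ← sub_lt_iff_lt_add', lt_div_iff₀ hB]
  constructor <;> intro h <;> linarith

section Cube

variable {X : Type*} [NormedAddCommGroup X] [NormedSpace ℝ X]

noncomputable def toUnitBall (v : X) : X := (‖v‖ + 1)⁻¹ • v

lemma norm_toUnitBall_le (v : X) : ‖toUnitBall v‖ ≤ 1 := by
  rw [toUnitBall, norm_smul, norm_inv, Real.norm_of_nonneg (by positivity),
    inv_mul_le_one₀ (by positivity)]
  linarith

variable {K : Type*} {f : K → WeakDual ℝ X} {B : ℝ}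

noncomputable def cubeMap (f : K → WeakDual ℝ X) (hB : 0 < B) (hf : ∀ x v, ‖f x v‖ ≤ B * ‖v‖) :
    K → X → unitInterval :=
  fun x α => ⟨(1 + f x (toUnitBall α) / B) / 2, half_one_add_div_mem_unitInterval hB <|
    calc |f x (toUnitBall α)| ≤ B * ‖toUnitBall α‖ := hf x _
      _ ≤ B := mul_le_of_le_one_right hB.le (norm_toUnitBall_le α)⟩

lemma coe_cubeMap (hB : 0 < B) (hf : ∀ x v, ‖f x v‖ ≤ B * ‖v‖) (x : K) (α : X) :
    (cubeMap f hB hf x α : ℝ) = (1 + f x (toUnitBall α) / B) / 2 :=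
  rfl

lemma continuous_cubeMap [TopologicalSpace K] (hB : 0 < B) (hf : ∀ x v, ‖f x v‖ ≤ B * ‖v‖)
    (hcont : Continuous f) : Continuous (cubeMap f hB hf) :=
  continuous_pi fun _ => Continuous.subtype_mk
    ((((WeakDual.eval_continuous _).comp hcont).div_const B).const_add 1 |>.div_const 2) _

lemma injective_cubeMap (hB : 0 < B) (hf : ∀ x v, ‖f x v‖ ≤ B * ‖v‖) (hinj : Injective f) :
    Injective (cubeMap f hB hf) := by
  intro x y hxy
  refine hinj (DFunLike.ext _ _ fun α => ?_)
  have hα : f x (toUnitBall α) = f y (toUnitBall α) := by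
    have := congrArg Subtype.val (congrFun hxy α)
    rw [coe_cubeMap, coe_cubeMap] at this
    field_simp at this
    linarith
  simp only [toUnitBall, map_smul, smul_eq_mul] at hα
  exact mul_left_cancel₀ (by positivity) hα

lemma isEmbedding_cubeMap [TopologicalSpace K] [CompactSpace K] (hB : 0 < B)
    (hf : ∀ x v, ‖f x v‖ ≤ B * ‖v‖) (hcont : Continuous f) (hinj : Injective f) :
    Topology.IsEmbedding (cubeMap f hB hf) :=
  ((continuous_cubeMap hB hf hcont).isClosedEmbedding (injective_cubeMap hB hf hinj)).isEmbedding

end Cube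

theorem isQWRN_of_isWRN_general
    (K : Type*) [TopologicalSpace K] [CompactSpace K]
    (h : IsWRN K) : IsQWRN K := by
  obtain ⟨X, _, _, _, S, hL1, hS, ⟨e⟩⟩ := h
  obtain ⟨B, hB, hSB⟩ := WeakDual.exists_pos_norm_apply_le_of_isCompact hS
  let f : K → WeakDual ℝ X := fun x => e x
  have hf : ∀ x v, ‖f x v‖ ≤ B * ‖v‖ := fun x => hSB _ (e x).2
  refine ⟨X, cubeMap f hB hf, isEmbedding_cubeMap hB hf (continuous_subtype_val.comp e.continuous)
    (Subtype.val_injective.comp e.injective), fun ε hε => ⟨fun _ => univ, iUnion_const univ, ?_⟩⟩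
  rintro - p q hpq ⟨φ, -, hind⟩
  simp only [gt_iff_lt, coe_cubeMap, half_one_add_div_lt_iff hB, lt_half_one_add_div_iff hB] at hind
  exact hL1 (containsL1_of_isIndependentSeq hB hf (fun m => norm_toUnitBall_le (φ m))
    (mul_lt_mul_of_pos_left (by linarith) hB) hind)

/-- Every WRN compact Hausdorff space is QWRN. -/
theorem isQWRN_of_isWRN
    (K : Type*) [TopologicalSpace K] [CompactSpace K] [T2Space K]
    (h : IsWRN K) : IsQWRN K :=
  isQWRN_of_isWRN_general K h
end

section
/- Let Γ be a set and let K ⊆ Σ(Γ) be a solid compact subset (with the product topology of ℝ^Γ) which is quasi weakly Radon–Nikodým. Then for every ε > 0 there exists a countable decomposition Γ = ⋃_{n∈ℕ} Γₙ such that for every x ∈ K and every n ∈ ℕ, the set {γ ∈ Γₙ : |x_γ| > ε} is finite. -/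
open Set Function

section FarmakiAux

lemma my_infinite_fiber {V : Type*} [Finite V] (S : Set ℕ) (hS : S.Infinite) (v : ℕ → V) :
    ∃ c, {j | j ∈ S ∧ v j = c}.Infinite := by
  by_contra h
  push_neg at h
  have hsub : S ⊆ ⋃ c : V, {j | j ∈ S ∧ v j = c} :=
    fun j hj => Set.mem_iUnion.2 ⟨v j, hj, rfl⟩
  exact hS ((Set.finite_iUnion h).subset hsub)

lemma my_greedy (S : Set ℕ) (hS : S.Infinite) (R : ℕ → ℕ → Prop)
    (h : ∀ F : Finset ℕ, ↑F ⊆ S →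
      ({j | j ∈ S ∧ ∃ j' ∈ F, ¬(R j' j ∧ R j j')}).Finite) :
    ∃ f : ℕ → ℕ, StrictMono f ∧ (∀ n, f n ∈ S) ∧ ∀ m n, m ≠ n → R (f m) (f n) := by
  classical
  have key : ∀ F : Finset ℕ, ↑F ⊆ S →
      ∃ j, (j ∈ S ∧ ∀ j' ∈ F, R j' j ∧ R j j') ∧ ∀ a ∈ F, a < j := by
    intro F hFS
    have hbig : (S \ ({j | j ∈ S ∧ ∃ j' ∈ F, ¬(R j' j ∧ R j j')} ∪
        {j | ∃ a ∈ F, j ≤ a})).Infinite := by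
      apply Set.Infinite.diff hS
      apply Set.Finite.union (h F hFS)
      apply Set.Finite.subset (Set.finite_Iic (F.sup id))
      intro j hj
      obtain ⟨a, ha, hja⟩ := hj
      exact le_trans hja (Finset.le_sup (f := id) ha)
    obtain ⟨j, hj⟩ := hbig.nonempty
    obtain ⟨hjS, hj2⟩ := hj
    simp only [Set.mem_union, Set.mem_setOf_eq, not_or, not_exists, not_and] at hj2
    obtain ⟨hj3, hj4⟩ := hj2
    push_neg at hj3
    refine ⟨j, ⟨hjS, fun j' hj' => hj3 hjS j' hj'⟩, fun a ha => ?_⟩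
    have := hj4 a ha
    omega
  let step : Finset ℕ → ℕ := fun F => if hFS : ↑F ⊆ S then (key F hFS).choose else 0
  have hstep : ∀ F (hFS : ↑F ⊆ S), (step F ∈ S ∧ ∀ j' ∈ F, R j' (step F) ∧ R (step F) j') ∧
      ∀ a ∈ F, a < step F := by
    intro F hFS
    simp only [step, dif_pos hFS]
    exact (key F hFS).choose_spec
  let A : ℕ → Finset ℕ := fun n => Nat.rec ∅ (fun _ F => insert (step F) F) n
  have hAsucc : ∀ n, A (n + 1) = insert (step (A n)) (A n) := fun n => rfl
  have hAS : ∀ n, ∀ a ∈ A n, a ∈ S := by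
    intro n
    induction n with
    | zero => simp [A]
    | succ k ih =>
      intro a ha
      rw [hAsucc] at ha
      rcases Finset.mem_insert.mp ha with h' | h'
      · rw [h']; exact (hstep (A k) ih).1.1
      · exact ih a h'
  let f : ℕ → ℕ := fun n => step (A n)
  have hmemA : ∀ m n, m < n → f m ∈ A n := by
    intro m n hmn
    induction n with
    | zero => omega
    | succ k ih =>
      rw [hAsucc]
      rcases Nat.lt_succ_iff_lt_or_eq.mp hmn with h' | h'
      · exact Finset.mem_insert_of_mem (ih h')
      · subst h'; exact Finset.mem_insert_self _ _
  have hmono : StrictMono f := by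
    apply strictMono_nat_of_lt_succ
    intro n
    exact (hstep (A (n+1)) (hAS (n+1))).2 (f n) (hmemA n (n+1) (Nat.lt_succ_self n))
  refine ⟨f, hmono, fun n => (hstep (A n) (hAS n)).1.1, ?_⟩
  have hpair : ∀ m n, m < n → R (f m) (f n) ∧ R (f n) (f m) := by
    intro m n hmn
    have h1 := (hstep (A n) (hAS n)).1.2 (f m) (hmemA m n hmn)
    exact ⟨h1.1, h1.2⟩
  intro m n hmn
  rcases lt_or_gt_of_ne hmn with h' | h'
  · exact (hpair m n h').1
  · exact (hpair n m h').2

lemma my_weak_delta (L : ℕ) : ∀ (E : ℕ → Finset ℕ) (S : Set ℕ), S.Infinite →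
    (∀ j ∈ S, (E j).card ≤ L) →
    ∃ (C : Finset ℕ) (S' : Set ℕ), S' ⊆ S ∧ S'.Infinite ∧
      ∀ j ∈ S', ∀ j' ∈ S', j ≠ j' → ∀ a, a ∈ E j → a ∈ E j' → a ∈ C := by
  classical
  induction L with
  | zero =>
    intro E S hS hcard
    refine ⟨∅, S, subset_rfl, hS, ?_⟩
    intro j hj j' hj' hne a ha ha'
    have h0 := hcard j hj
    have he : E j = ∅ := Finset.card_eq_zero.mp (Nat.le_zero.mp h0)
    rw [he] at ha
    exact absurd ha (Finset.notMem_empty a)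
  | succ L ih =>
    intro E S hS hcard
    by_cases hcase : ∃ a, {j | j ∈ S ∧ a ∈ E j}.Infinite
    · obtain ⟨a, ha⟩ := hcase
      obtain ⟨C, S', hsub, hinf, hC⟩ := ih (fun j => E j \ {a}) {j | j ∈ S ∧ a ∈ E j} ha
        (by
          intro j hj
          have h1 : a ∈ E j := hj.2
          have h2 := hcard j hj.1
          show (E j \ {a}).card ≤ L
          have h3 : (E j \ {a}).card = (E j).card - 1 := by
            rw [Finset.card_sdiff_of_subset (Finset.singleton_subset_iff.mpr h1), Finset.card_singleton]
          omega)
      refine ⟨insert a C, S', fun j hj => (hsub hj).1, hinf, ?_⟩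
      intro j hj j' hj' hne b hb hb'
      by_cases hba : b = a
      · subst hba; exact Finset.mem_insert_self _ _
      · refine Finset.mem_insert_of_mem (hC j hj j' hj' hne b ?_ ?_) <;>
          simp [Finset.mem_sdiff, hb, hb', hba]
    · push_neg at hcase
      obtain ⟨f, hmono, hfS, hR⟩ := my_greedy S hS (fun j j' => Disjoint (E j) (E j'))
        (by
          intro F _
          apply Set.Finite.subset
            (Set.Finite.biUnion F.finite_toSet
              (fun j' _ => Set.Finite.biUnion (E j').finite_toSet (fun a _ => hcase a)))
          intro j hj
          obtain ⟨hjS, j', hj'F, hj'⟩ := hj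
          have hnd : ¬ Disjoint (E j') (E j) := by
            intro hd
            exact hj' ⟨hd, hd.symm⟩
          obtain ⟨b, hb1, hb2⟩ := Finset.not_disjoint_iff.mp hnd
          exact Set.mem_iUnion₂.mpr ⟨j', hj'F, Set.mem_iUnion₂.mpr ⟨b, hb1, hjS, hb2⟩⟩)
      refine ⟨∅, Set.range f, ?_, ?_, ?_⟩
      · rintro _ ⟨n, rfl⟩; exact hfS n
      · exact Set.infinite_range_of_injective hmono.injective
      · rintro _ ⟨m, rfl⟩ _ ⟨n, rfl⟩ hne a ham han
        exfalso
        have hmn : m ≠ n := fun h => hne (by rw [h])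
        exact Finset.notMem_empty a ((hR m n hmn).le_bot (Finset.mem_inter.mpr ⟨ham, han⟩))


lemma my_pi_nhds {Γ : Type*} (K : Set (Γ → ℝ)) (y : ↥K) (U : Set ↥K) (hU : U ∈ nhds y) :
    ∃ (E : Finset Γ) (θ : ℝ), 0 < θ ∧
      ∀ z : ↥K, (∀ γ ∈ E, |(z : Γ → ℝ) γ - (y : Γ → ℝ) γ| < θ) → z ∈ U := by
  classical
  obtain ⟨x, hx⟩ := y
  rw [nhds_subtype_eq_comap] at hU
  obtain ⟨V, hV, hVU⟩ := hU
  rw [nhds_pi, Filter.mem_pi] at hV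
  obtain ⟨I, hIfin, t, ht, hsub⟩ := hV
  have hball : ∀ γ : Γ, ∃ r : ℝ, 0 < r ∧ Metric.ball (x γ) r ⊆ t γ := by
    intro γ
    obtain ⟨r, hr, hb⟩ := Metric.mem_nhds_iff.mp (ht γ)
    exact ⟨r, hr, hb⟩
  choose r hr hball using hball
  set E : Finset Γ := hIfin.toFinset with hE
  have hmemE : ∀ γ, γ ∈ I → γ ∈ E := fun γ hγ => hIfin.mem_toFinset.mpr hγ
  by_cases hne : E.Nonempty
  · refine ⟨E, E.inf' hne r, ?_, ?_⟩
    · rw [Finset.lt_inf'_iff]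
      exact fun γ _ => hr γ
    · intro z hz
      apply hVU
      apply hsub
      intro γ hγ
      apply hball γ
      rw [Metric.mem_ball, Real.dist_eq]
      exact lt_of_lt_of_le (hz γ (hmemE γ hγ)) (Finset.inf'_le r (hmemE γ hγ))
  · refine ⟨∅, 1, one_pos, ?_⟩
    intro z _
    apply hVU
    apply hsub
    intro γ hγ
    exact absurd (hmemE γ hγ) (fun h => hne ⟨γ, h⟩)


lemma my_agree {Γ : Type*} (K : Set (Γ → ℝ)) (hcomp : IsCompact K) (g : ↥K → ℝ)
    (hg : Continuous g) (θ : ℝ) (hθ : 0 < θ) :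
    ∃ E : Finset Γ, ∀ y z : ↥K, (∀ γ ∈ E, (y : Γ → ℝ) γ = (z : Γ → ℝ) γ) →
      |g y - g z| < θ := by
  classical
  haveI : CompactSpace ↥K := isCompact_iff_compactSpace.mp hcomp
  have hU : ∀ y : ↥K, g ⁻¹' Metric.ball (g y) (θ/2) ∈ nhds y := by
    intro y
    apply hg.continuousAt.preimage_mem_nhds
    exact Metric.ball_mem_nhds _ (by linarith)
  have hEx := fun y => my_pi_nhds K y _ (hU y)
  choose E r hr hspec using hEx
  set O : ↥K → Set ↥K := fun y => {z | ∀ γ ∈ E y, |(z : Γ → ℝ) γ - (y : Γ → ℝ) γ| < r y / 2}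
    with hO
  have hOopen : ∀ y, IsOpen (O y) := by
    intro y
    have : O y = ⋂ γ ∈ E y, {z : ↥K | |(z : Γ → ℝ) γ - (y : Γ → ℝ) γ| < r y / 2} := by
      ext z; simp [hO]
    rw [this]
    apply (E y).finite_toSet.isOpen_biInter
    intro γ _
    exact isOpen_lt (Continuous.abs (((continuous_apply γ).comp continuous_subtype_val).sub continuous_const)) continuous_const
  have hcover : (Set.univ : Set ↥K) ⊆ ⋃ y, O y := by
    intro y _
    exact Set.mem_iUnion.mpr ⟨y, fun γ _ => by simpa using half_pos (hr y)⟩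
  obtain ⟨Y, hY⟩ := isCompact_univ.elim_finite_subcover O hOopen hcover
  refine ⟨Y.biUnion E, ?_⟩
  intro y z hagree
  obtain ⟨w, hwY, hyw⟩ : ∃ w ∈ Y, y ∈ O w := by
    have := hY (Set.mem_univ y)
    simpa using this
  have hy : y ∈ g ⁻¹' Metric.ball (g w) (θ/2) := by
    apply hspec w
    intro γ hγ
    exact lt_trans (hyw γ hγ) (by linarith [hr w])
  have hz : z ∈ g ⁻¹' Metric.ball (g w) (θ/2) := by
    apply hspec w
    intro γ hγ
    have hmem : γ ∈ Y.biUnion E := Finset.mem_biUnion.mpr ⟨w, hwY, hγ⟩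
    calc |(z : Γ → ℝ) γ - (w : Γ → ℝ) γ| = |(y : Γ → ℝ) γ - (w : Γ → ℝ) γ| := by
          rw [hagree γ hmem]
      _ < r w := by linarith [hyw γ hγ, hr w]
  simp only [Set.mem_preimage, Metric.mem_ball, Real.dist_eq] at hy hz
  calc |g y - g z| ≤ |g y - g w| + |g w - g z| := abs_sub_le _ _ _
    _ < θ := by rw [abs_sub_comm (g z) (g w)] at hz; linarith


lemma my_sep {Γ : Type*} {Δ : Type*} [Inhabited Δ] (K : Set (Γ → ℝ)) (hcomp : IsCompact K)
    (i : ↥K → Δ → unitInterval) (hcont : Continuous i) (hinj : Injective i)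
    (F0 F1 : Set ↥K) (h0 : IsClosed F0) (h1 : IsClosed F1)
    (hdisj : ∀ y : ↥K, ¬(y ∈ F0 ∧ y ∈ F1)) :
    ∃ (k : ℕ) (D : ℕ → Δ) (m : ℕ), ∀ y0 ∈ F0, ∀ y1 ∈ F1, ∃ t, t < k ∧
      1/((m:ℝ)+1) ≤ |((i y0 (D t) : ℝ)) - ((i y1 (D t) : ℝ))| := by
  classical
  haveI : CompactSpace ↥K := isCompact_iff_compactSpace.mp hcomp
  have hP : IsCompact (F0 ×ˢ F1) := (h0.isCompact).prod (h1.isCompact)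
  have hxd : ∀ z : {z : ↥K × ↥K // z.1 ∈ F0 ∧ z.2 ∈ F1},
      ∃ d : Δ, ((i (z : ↥K × ↥K).1 d : ℝ)) ≠ ((i (z : ↥K × ↥K).2 d : ℝ)) := by
    rintro ⟨⟨y0, y1⟩, hy0, hy1⟩
    have hne : y0 ≠ y1 := by
      intro h
      exact hdisj y0 ⟨hy0, h ▸ hy1⟩
    have : i y0 ≠ i y1 := fun h => hne (hinj h)
    obtain ⟨d, hd⟩ := Function.ne_iff.mp this
    exact ⟨d, fun h => hd (Subtype.coe_injective h)⟩
  choose dd hdd using hxd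
  set rr : {z : ↥K × ↥K // z.1 ∈ F0 ∧ z.2 ∈ F1} → ℝ :=
    fun z => |((i (z : ↥K × ↥K).1 (dd z) : ℝ)) - ((i (z : ↥K × ↥K).2 (dd z) : ℝ))| with hrr
  have hrrpos : ∀ z, 0 < rr z := by
    intro z
    rw [hrr]
    exact abs_sub_pos.mpr (hdd z)
  set U : {z : ↥K × ↥K // z.1 ∈ F0 ∧ z.2 ∈ F1} → Set (↥K × ↥K) :=
    fun z => {w | rr z / 2 < |((i w.1 (dd z) : ℝ)) - ((i w.2 (dd z) : ℝ))|} with hU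
  have hUopen : ∀ z, IsOpen (U z) := by
    intro z
    apply isOpen_lt continuous_const
    apply Continuous.abs
    apply Continuous.sub
    · exact continuous_subtype_val.comp ((continuous_apply (dd z)).comp
        (hcont.comp continuous_fst))
    · exact continuous_subtype_val.comp ((continuous_apply (dd z)).comp
        (hcont.comp continuous_snd))
  have hcov : F0 ×ˢ F1 ⊆ ⋃ z, U z := by
    rintro ⟨y0, y1⟩ hp
    rw [Set.mem_prod] at hp
    refine Set.mem_iUnion.mpr ⟨⟨(y0, y1), hp⟩, ?_⟩
    show rr _ / 2 < _
    exact half_lt_self (hrrpos _)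
  obtain ⟨T, hT⟩ := hP.elim_finite_subcover U hUopen hcov
  by_cases hne : T.Nonempty
  · have hδpos : 0 < T.inf' hne (fun z => rr z / 2) := by
      rw [Finset.lt_inf'_iff]
      exact fun z _ => half_pos (hrrpos z)
    obtain ⟨m, hm⟩ := exists_nat_one_div_lt hδpos
    refine ⟨T.toList.length, fun n => ((T.toList.map dd).getD n default), m, ?_⟩
    intro y0 hy0 y1 hy1
    have hmem := hT (Set.mk_mem_prod hy0 hy1)
    obtain ⟨z, hzT, hzU⟩ := Set.mem_iUnion₂.mp hmem
    obtain ⟨n, hn⟩ := List.mem_iff_get.mp (Finset.mem_toList.mpr hzT)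
    refine ⟨n, n.2, ?_⟩
    have hlen : (n : ℕ) < (T.toList.map dd).length := by simpa using n.2
    simp only [List.getD_eq_getElem _ _ hlen, List.getElem_map]
    have h1 : (1:ℝ)/(m+1) ≤ rr z / 2 := by
      calc (1:ℝ)/(m+1) ≤ T.inf' hne (fun z => rr z / 2) := le_of_lt hm
        _ ≤ rr z / 2 := Finset.inf'_le _ hzT
    have h2 : rr z / 2 < |((i y0 (dd z) : ℝ)) - ((i y1 (dd z) : ℝ))| := hzU
    have hz' : T.toList[(n:ℕ)] = z := by
      rw [← List.get_eq_getElem]; exact hn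
    simp only [hz']
    linarith
  · refine ⟨0, fun _ => default, 0, ?_⟩
    intro y0 hy0 y1 hy1
    exfalso
    have hmem := hT (Set.mk_mem_prod hy0 hy1)
    rw [Finset.not_nonempty_iff_eq_empty.mp hne] at hmem
    simpa using hmem

end FarmakiAux

set_option maxHeartbeats 2000000 in
/-- If `K ⊆ Σ(Γ)` is a solid compact subset which is QWRN, then for every `ε > 0` there is a
countable decomposition `Γ = ⋃ n, Γs n` such that for every `x ∈ K` and every `n`, the set
`{γ ∈ Γs n | |x γ| > ε}` is finite. -/
theorem solid_sigmaProduct_isQWRN_farmaki_condition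
    {Γ : Type*} (K : Set (Γ → ℝ)) (hcomp : IsCompact K)
    (hsigma : ∀ x ∈ K, {γ : Γ | x γ ≠ 0}.Countable)
    (hsolid : ∀ x ∈ K, ∀ A : Finset Γ, (A : Set Γ).indicator x ∈ K)
    (hq : IsQWRN K) :
    ∀ ε : ℝ, ε > 0 → ∃ Γs : ℕ → Set Γ, (⋃ n, Γs n) = Set.univ ∧
      ∀ x ∈ K, ∀ n : ℕ, {γ ∈ Γs n | |x γ| > ε}.Finite := by
  classical
  intro ε hε
  obtain ⟨Δ, i, hemb, hq⟩ := hq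
  by_cases hΔ : Nonempty Δ
  swap
  · -- degenerate case : K is a subsingleton consisting of the zero function
    refine ⟨fun _ => Set.univ, by rw [Set.iUnion_const], ?_⟩
    intro x hx n
    have h0K : (fun _ => (0:ℝ)) ∈ K := by
      have h := hsolid x hx ∅
      simpa using h
    have hxeq : x = fun _ => 0 := by
      have h1 : i ⟨x, hx⟩ = i ⟨fun _ => 0, h0K⟩ := by
        funext d; exact absurd ⟨d⟩ hΔ
      exact congrArg Subtype.val (hemb.injective h1)
    have hset : {γ | γ ∈ (Set.univ : Set Γ) ∧ |x γ| > ε} = ∅ := by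
      ext γ
      simp only [Set.mem_setOf_eq, Set.mem_empty_iff_false, iff_false, not_and]
      intro _
      rw [hxeq]
      simp only [abs_zero]
      exact not_lt.mpr hε.le
    exact hset ▸ Set.finite_empty
  · haveI : Inhabited Δ := Classical.inhabited_of_nonempty hΔ
    haveI : CompactSpace ↥K := isCompact_iff_compactSpace.mp hcomp
    -- decompositions of Δ for each precision level
    have hdec : ∀ m : ℕ, ∃ Ds : ℕ → Set Δ, (⋃ n, Ds n) = Set.univ ∧
        ∀ n : ℕ, ∀ p q : ℝ, q - p > 1/(8*((m:ℝ)+1)) →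
          ¬ ∃ φ : ℕ → Δ, (∀ r, φ r ∈ Ds n) ∧
            IsIndependentSeq (fun r => {x : ↥K | (i x (φ r) : ℝ) < p})
                             (fun r => {x : ↥K | (i x (φ r) : ℝ) > q}) := by
      intro m
      exact hq (1/(8*((m:ℝ)+1))) (by positivity)
    choose Ds hDsU hDsInd using hdec
    have hpieceEx : ∀ m (d : Δ), ∃ n, d ∈ Ds m n := by
      intro m d
      have h := hDsU m
      rw [Set.eq_univ_iff_forall] at h
      exact Set.mem_iUnion.mp (h d)
    choose piece hpiece using hpieceEx
    -- the closed sets F0 and F1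
    set F0 : Γ → Set ↥K := fun γ => {y | |(y : Γ → ℝ) γ| ≤ ε/2} with hF0
    set F1 : Γ → Set ↥K := fun γ => {y | ε ≤ |(y : Γ → ℝ) γ|} with hF1
    have hcγ : ∀ γ : Γ, Continuous (fun y : ↥K => |(y : Γ → ℝ) γ|) :=
      fun γ => ((continuous_apply γ).comp continuous_subtype_val).abs
    have hF0c : ∀ γ, IsClosed (F0 γ) := fun γ => isClosed_le (hcγ γ) continuous_const
    have hF1c : ∀ γ, IsClosed (F1 γ) := fun γ => isClosed_le continuous_const (hcγ γ)
    have hdisj : ∀ γ, ∀ y : ↥K, ¬(y ∈ F0 γ ∧ y ∈ F1 γ) := by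
      rintro γ y ⟨h0, h1⟩
      rw [hF0] at h0; rw [hF1] at h1
      simp only [Set.mem_setOf_eq] at h0 h1
      linarith
    -- separation data
    have hsepEx := fun γ => my_sep K hcomp i hemb.continuous hemb.injective
      (F0 γ) (F1 γ) (hF0c γ) (hF1c γ) (hdisj γ)
    choose kk DD mm hsep using hsepEx
    -- agreement data
    have hagreeEx : ∀ (γ : Γ) (t : ℕ), ∃ E : Finset Γ,
        ∀ y z : ↥K, (∀ γ' ∈ E, (y : Γ → ℝ) γ' = (z : Γ → ℝ) γ') →
          |((i y (DD γ t) : ℝ)) - ((i z (DD γ t) : ℝ))| < 1/(32*((mm γ : ℝ)+1)) := by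
      intro γ t
      apply my_agree K hcomp (fun y => ((i y (DD γ t) : ℝ)))
      · exact continuous_subtype_val.comp ((continuous_apply (DD γ t)).comp hemb.continuous)
      · positivity
    choose EE hEE using hagreeEx
    -- the classification
    set cls : Γ → ℕ × ℕ × ℕ × List ℕ := fun γ =>
      (mm γ, kk γ, ∑ t ∈ Finset.range (kk γ), (EE γ t).card,
        (List.range (kk γ)).map (fun t => piece (mm γ) (DD γ t))) with hcls
    refine ⟨fun n => {γ | Encodable.encode (cls γ) = n}, ?_, ?_⟩
    · rw [Set.eq_univ_iff_forall]
      intro γ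
      exact Set.mem_iUnion.mpr ⟨Encodable.encode (cls γ), rfl⟩
    intro x hx n
    by_contra hinf
    have hTinf : {γ | Encodable.encode (cls γ) = n ∧ |x γ| > ε}.Infinite := hinf
    have emb := Set.Infinite.natEmbedding _ hTinf
    set g : ℕ → Γ := fun l => (emb l : Γ) with hgdef
    have ginj : Injective g := fun a b h => emb.injective (Subtype.coe_injective h)
    have hgT : ∀ l, Encodable.encode (cls (g l)) = n ∧ |x (g l)| > ε := fun l => (emb l).2
    obtain ⟨γ0, hγ0⟩ := hTinf.nonempty
    have hclg : ∀ l, cls (g l) = cls γ0 :=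
      fun l => Encodable.encode_injective ((hgT l).1.trans hγ0.1.symm)
    have hm : ∀ l, mm (g l) = mm γ0 := fun l => congrArg (fun c => c.1) (hclg l)
    have hk : ∀ l, kk (g l) = kk γ0 := fun l => congrArg (fun c => c.2.1) (hclg l)
    have hkl : ∀ l, (∑ t ∈ Finset.range (kk (g l)), (EE (g l) t).card)
        = ∑ t ∈ Finset.range (kk γ0), (EE γ0 t).card :=
      fun l => congrArg (fun c => c.2.2.1) (hclg l)
    have hnsl : ∀ l, (List.range (kk (g l))).map (fun t => piece (mm (g l)) (DD (g l) t))
        = (List.range (kk γ0)).map (fun t => piece (mm γ0) (DD γ0 t)) :=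
      fun l => congrArg (fun c => c.2.2.2) (hclg l)
    -- numeric constants
    set Mr : ℝ := (mm γ0 : ℝ) + 1 with hMr
    have hMrpos : 0 < Mr := by rw [hMr]; positivity
    set u : ℝ := 1/(32*Mr) with hu
    have hupos : 0 < u := by rw [hu]; positivity
    -- restriction points
    set pt : Finset ℕ → ↥K := fun A =>
      ⟨Set.indicator ↑(Finset.image g A) x, hsolid x hx _⟩ with hptdef
    have hptg : ∀ (A : Finset ℕ) (l : ℕ),
        (pt A : Γ → ℝ) (g l) = if l ∈ A then x (g l) else 0 := by
      intro A l
      show Set.indicator (↑(Finset.image g A)) x (g l) = _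
      by_cases h : l ∈ A
      · rw [if_pos h]
        exact Set.indicator_of_mem (Finset.mem_coe.mpr (Finset.mem_image_of_mem g h)) x
      · rw [if_neg h]
        apply Set.indicator_of_notMem
        intro hmem
        obtain ⟨l2, hl2, he2⟩ := Finset.mem_image.mp (Finset.mem_coe.mp hmem)
        exact h (ginj he2 ▸ hl2)
    have hptout : ∀ (A : Finset ℕ) (γ2 : Γ), (∀ l, g l ≠ γ2) → (pt A : Γ → ℝ) γ2 = 0 := by
      intro A γ2 hno
      apply Set.indicator_of_notMem
      intro hmem
      obtain ⟨l2, _, he2⟩ := Finset.mem_image.mp (Finset.mem_coe.mp hmem)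
      exact hno l2 he2
    have hmemF1 : ∀ (A : Finset ℕ) (l : ℕ), l ∈ A → pt A ∈ F1 (g l) := by
      intro A l hl
      show ε ≤ |(pt A : Γ → ℝ) (g l)|
      rw [hptg A l, if_pos hl]
      exact ((hgT l).2).le
    have hmemF0 : ∀ (A : Finset ℕ) (l : ℕ), l ∉ A → pt A ∈ F0 (g l) := by
      intro A l hl
      show |(pt A : Γ → ℝ) (g l)| ≤ ε/2
      rw [hptg A l, if_neg hl, abs_zero]
      positivity
    -- toggle data
    have htog : ∀ j : ℕ, ∃ t, t < kk γ0 ∧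
        1/Mr ≤ |((i (pt ∅) (DD (g j) t) : ℝ)) - ((i (pt {j}) (DD (g j) t) : ℝ))| := by
      intro j
      obtain ⟨t, htk, hgap⟩ := hsep (g j) (pt ∅) (hmemF0 ∅ j (Finset.notMem_empty j))
        (pt {j}) (hmemF1 {j} j (Finset.mem_singleton_self j))
      refine ⟨t, by rw [← hk j]; exact htk, ?_⟩
      have heq : 1/((mm (g j) : ℝ)+1) = 1/Mr := by rw [hm j, hMr]
      rwa [heq] at hgap
    choose tj htjlt htjgap using htog
    set aj : ℕ → ℝ := fun j => ((i (pt ∅) (DD (g j) (tj j)) : ℝ)) with haj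
    set bj : ℕ → ℝ := fun j => ((i (pt {j}) (DD (g j) (tj j)) : ℝ)) with hbj
    have ha01 : ∀ j, 0 ≤ aj j ∧ aj j ≤ 1 :=
      fun j => ⟨unitInterval.nonneg _, unitInterval.le_one _⟩
    have hb01 : ∀ j, 0 ≤ bj j ∧ bj j ≤ 1 :=
      fun j => ⟨unitInterval.nonneg _, unitInterval.le_one _⟩
    set lo : ℕ → ℝ := fun j => min (aj j) (bj j) with hlo
    set hi : ℕ → ℝ := fun j => max (aj j) (bj j) with hhi
    have hgaplh : ∀ j, lo j + 1/Mr ≤ hi j := by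
      intro j
      have h1 := htjgap j
      have h2 : hi j - lo j = |bj j - aj j| := max_sub_min_eq_abs _ _
      rw [abs_sub_comm] at h1
      linarith
    have hlo0 : ∀ j, 0 ≤ lo j := fun j => le_min (ha01 j).1 (hb01 j).1
    have hlo1 : ∀ j, lo j ≤ 1 := fun j => le_trans (min_le_left _ _) (ha01 j).2
    set lj : ℕ → ℕ := fun j => ⌊lo j / u⌋₊ + 2 with hlj
    have hljlt : ∀ j, lj j < 32*(mm γ0 + 1) + 3 := by
      intro j
      have h1 : lo j / u ≤ 32*Mr := by
        rw [hu, div_div_eq_mul_div, div_one]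
        calc lo j * (32*Mr) ≤ 1 * (32*Mr) :=
              mul_le_mul_of_nonneg_right (hlo1 j) (by positivity)
          _ = 32*Mr := one_mul _
      have h2 : ⌊lo j / u⌋₊ < 32*(mm γ0 + 1) + 1 := by
        rw [Nat.floor_lt (div_nonneg (hlo0 j) hupos.le)]
        have : ((32*(mm γ0 + 1) + 1 : ℕ) : ℝ) = 32*Mr + 1 := by rw [hMr]; push_cast; ring
        rw [this]
        linarith
      show ⌊lo j / u⌋₊ + 2 < 32*(mm γ0 + 1) + 3
      omega
    set orj : ℕ → Bool := fun j => decide (aj j ≤ bj j) with horj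
    -- the finite coordinate sets
    have hEtinj : ∀ j t, Set.InjOn g (g ⁻¹' ↑(EE (g j) t)) := fun j t => ginj.injOn
    set Et : ℕ → ℕ → Finset ℕ := fun j t => (EE (g j) t).preimage g (hEtinj j t) with hEt
    have hEtmem : ∀ j t l, l ∈ Et j t ↔ g l ∈ EE (g j) t := by
      intro j t l
      rw [hEt]
      exact Finset.mem_preimage
    set Efin : ℕ → Finset ℕ := fun j => (Finset.range (kk γ0)).biUnion (Et j) with hEfin
    have hEfincard : ∀ j, (Efin j).card ≤ ∑ t ∈ Finset.range (kk γ0), (EE γ0 t).card := by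
      intro j
      calc (Efin j).card ≤ ∑ t ∈ Finset.range (kk γ0), (Et j t).card :=
            Finset.card_biUnion_le
        _ ≤ ∑ t ∈ Finset.range (kk γ0), (EE (g j) t).card := by
            apply Finset.sum_le_sum
            intro t _
            exact Finset.card_le_card_of_injOn g
              (fun l hl => (hEtmem j t l).mp hl) ginj.injOn
        _ = ∑ t ∈ Finset.range (kk (g j)), (EE (g j) t).card := by rw [hk j]
        _ = ∑ t ∈ Finset.range (kk γ0), (EE γ0 t).card := hkl j
    obtain ⟨C, S2, hS2sub, hS2inf, hC⟩ := my_weak_delta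
      (∑ t ∈ Finset.range (kk γ0), (EE γ0 t).card) Efin Set.univ Set.infinite_univ
      (fun j _ => hEfincard j)
    set S1 : Set ℕ := S2 \ ↑C with hS1
    have hS1inf : S1.Infinite := hS2inf.diff (C.finite_toSet)
    have hgreedyFin : ∀ F : Finset ℕ, ↑F ⊆ S1 →
        ({j | j ∈ S1 ∧ ∃ j2 ∈ F, ¬(j2 ∉ Efin j ∧ j ∉ Efin j2)}).Finite := by
      intro F hFS
      have hsub : {j | j ∈ S1 ∧ ∃ j2 ∈ F, ¬(j2 ∉ Efin j ∧ j ∉ Efin j2)} ⊆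
          ⋃ j2 ∈ F, ({j | j ∈ S1 ∧ j ≠ j2 ∧ j2 ∈ Efin j} ∪ {j2} ∪ ↑(Efin j2)) := by
        intro j hj
        obtain ⟨hjS, j2, hj2F, hj2⟩ := hj
        apply Set.mem_biUnion hj2F
        by_cases hjj2 : j = j2
        · exact Or.inl (Or.inr (by simp [hjj2]))
        · rw [not_and_or, not_not, not_not] at hj2
          rcases hj2 with h2 | h2
          · exact Or.inl (Or.inl ⟨hjS, hjj2, h2⟩)
          · exact Or.inr h2
      apply Set.Finite.subset _ hsub
      apply Set.Finite.biUnion F.finite_toSet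
      intro j2 hj2F
      apply Set.Finite.union
      apply Set.Finite.union
      · apply Set.Subsingleton.finite
        intro j1 h1 j3 h3
        by_contra hne
        have hj2C : j2 ∈ C := hC j1 (h1.1).1 j3 (h3.1).1 hne j2 h1.2.2 h3.2.2
        exact (hFS hj2F).2 hj2C
      · exact Set.finite_singleton j2
      · exact (Efin j2).finite_toSet
    obtain ⟨f, hfmono, hfS1, hfR⟩ := my_greedy S1 hS1inf (fun j j2 => j ∉ Efin j2) hgreedyFin
    -- pigeonhole
    have hk0pos : 0 < kk γ0 := Nat.lt_of_le_of_lt (Nat.zero_le _) (htjlt 0)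
    set v : ℕ → Fin (kk γ0) × Fin (32*(mm γ0 + 1) + 3) × Bool :=
      fun j => (⟨tj j, htjlt j⟩, ⟨lj j, hljlt j⟩, orj j) with hv
    obtain ⟨c, hcinf⟩ := my_infinite_fiber (Set.range f)
      (Set.infinite_range_of_injective hfmono.injective) v
    have emb2 := Set.Infinite.natEmbedding _ hcinf
    set e : ℕ → ℕ := fun r => (emb2 r : ℕ) with hedef
    have heinj : Injective e := fun a b h => emb2.injective (Subtype.coe_injective h)
    have heP : ∀ r, e r ∈ Set.range f ∧ v (e r) = c := fun r => (emb2 r).2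
    have hte : ∀ r, tj (e r) = (c.1 : ℕ) := by
      intro r
      have h := congrArg (fun w => ((w.1 : Fin (kk γ0)) : ℕ)) (heP r).2
      simpa [hv] using h
    have hle : ∀ r, lj (e r) = ((c.2.1 : Fin (32*(mm γ0 + 1) + 3)) : ℕ) := by
      intro r
      have h := congrArg (fun w => ((w.2.1 : Fin (32*(mm γ0 + 1) + 3)) : ℕ)) (heP r).2
      simpa [hv] using h
    have hore : ∀ r, orj (e r) = c.2.2 := by
      intro r
      have h := congrArg (fun w => w.2.2) (heP r).2
      simpa [hv] using h
    have heR : ∀ r s, r ≠ s → e r ∉ Efin (e s) := by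
      intro r s hrs
      obtain ⟨mr, hmr⟩ := (heP r).1
      obtain ⟨ms, hms⟩ := (heP s).1
      have hne : mr ≠ ms := by
        intro hh
        apply hrs
        apply heinj
        rw [← hmr, ← hms, hh]
      rw [← hmr, ← hms]
      exact hfR mr ms hne
    -- final constants
    set tstar : ℕ := (c.1 : ℕ) with htstar
    have htstarlt : tstar < kk γ0 := c.1.2
    set nstar : ℕ := piece (mm γ0) (DD γ0 tstar) with hnstar
    set Pr : ℝ := ((c.2.1 : Fin (32*(mm γ0 + 1) + 3)) : ℕ) * u with hPr
    set Qr : ℝ := Pr + 5*u with hQr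
    have h4u : 1/(8*Mr) = 4*u := by
      rw [hu]
      field_simp
      ring
    apply hDsInd (mm γ0) nstar Pr Qr
    · show Qr - Pr > 1/(8*((mm γ0 : ℝ)+1))
      rw [← hMr, h4u, hQr]
      have : Pr + 5*u - Pr = 5*u := by ring
      rw [this]
      linarith
    refine ⟨fun r => DD (g (e r)) tstar, ?_, ?_⟩
    · intro r
      have hlist := hnsl (e r)
      have hlen1 : tstar < ((List.range (kk (g (e r)))).map
          (fun t => piece (mm (g (e r))) (DD (g (e r)) t))).length := by
        simpa [hk (e r)] using htstarlt
      have hlen2 : tstar < ((List.range (kk γ0)).map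
          (fun t => piece (mm γ0) (DD γ0 t))).length := by
        simpa using htstarlt
      have hgetEq : piece (mm (g (e r))) (DD (g (e r)) tstar)
          = piece (mm γ0) (DD γ0 tstar) := by
        have h := congrArg (fun L : List ℕ => L.getD tstar 0) hlist
        simp only [List.getD_eq_getElem _ _ hlen1, List.getD_eq_getElem _ _ hlen2,
          List.getElem_map, List.getElem_range] at h
        exact h
      have hp := hpiece (mm (g (e r))) (DD (g (e r)) tstar)
      rw [hgetEq, hm (e r)] at hp
      exact hp
    · intro nn εb
      set bits : Fin nn → Bool := fun r => if c.2.2 = true then εb r else !(εb r) with hbits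
      set A : Finset ℕ := Finset.image (fun r : Fin nn => e (r : ℕ))
        (Finset.univ.filter (fun r => bits r = true)) with hA
      refine ⟨pt A, ?_⟩
      rw [Set.mem_iInter]
      intro r
      have hmemA : ∀ s : Fin nn, e (s : ℕ) ∈ A ↔ bits s = true := by
        intro s
        rw [hA]
        simp only [Finset.mem_image, Finset.mem_filter, Finset.mem_univ, true_and]
        constructor
        · rintro ⟨s2, hs2, hes⟩
          have hval : (s2 : ℕ) = (s : ℕ) := heinj hes
          rwa [← Fin.ext hval]
        · intro hb
          exact ⟨s, hb, rfl⟩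
      set A' : Finset ℕ := if bits r = true then {e (r : ℕ)} else ∅ with hA'
      have hiff : ∀ l : ℕ, g l ∈ EE (g (e (r : ℕ))) tstar → (l ∈ A ↔ l ∈ A') := by
        intro l hlEE
        constructor
        · intro hlA
          rw [hA] at hlA
          obtain ⟨s, hs, hes⟩ := Finset.mem_image.mp hlA
          have hbs : bits s = true := (Finset.mem_filter.mp hs).2
          by_cases hsr : (s : ℕ) = (r : ℕ)
          · have hsr2 : s = r := Fin.ext hsr
            subst hsr2
            rw [hA', if_pos hbs, ← hes]
            exact Finset.mem_singleton_self _
          · exfalso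
            apply heR (s : ℕ) (r : ℕ) hsr
            rw [hEfin]
            apply Finset.mem_biUnion.mpr
            refine ⟨tstar, Finset.mem_range.mpr htstarlt, ?_⟩
            rw [hEtmem]
            rw [hes]
            exact hlEE
        · intro hlA'
          rw [hA'] at hlA'
          by_cases hbr : bits r = true
          · rw [if_pos hbr] at hlA'
            have hlj2 : l = e (r : ℕ) := Finset.mem_singleton.mp hlA'
            rw [hlj2]
            exact (hmemA r).mpr hbr
          · rw [if_neg hbr] at hlA'
            exact absurd hlA' (Finset.notMem_empty l)
      have hagreeA : ∀ γ2 ∈ EE (g (e (r : ℕ))) tstar,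
          (pt A : Γ → ℝ) γ2 = (pt A' : Γ → ℝ) γ2 := by
        intro γ2 hγ2
        by_cases hex : ∃ l, g l = γ2
        · obtain ⟨l, rfl⟩ := hex
          rw [hptg A l, hptg A' l]
          have hif := hiff l hγ2
          by_cases hla : l ∈ A
          · rw [if_pos hla, if_pos (hif.mp hla)]
          · rw [if_neg hla, if_neg (fun hh => hla (hif.mpr hh))]
        · push_neg at hex
          rw [hptout A _ hex, hptout A' _ hex]
      have hclose := hEE (g (e (r : ℕ))) tstar (pt A) (pt A') hagreeA
      have hub : 1/(32*((mm (g (e (r : ℕ))) : ℝ)+1)) = u := by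
        rw [hm (e (r : ℕ)), ← hMr, ← hu]
      rw [hub] at hclose
      -- identify the endpoint value
      have htjr : tj (e (r : ℕ)) = tstar := hte r
      have hend : ((i (pt A') (DD (g (e (r : ℕ))) tstar) : ℝ))
          = (if bits r = true then bj (e (r : ℕ)) else aj (e (r : ℕ))) := by
        by_cases hb : bits r = true
        · rw [hA', if_pos hb, if_pos hb, hbj, ← htjr]
        · rw [hA', if_neg hb, if_neg hb, haj, ← htjr]
      -- numeric facts at j := e r
      have hPrj : Pr = ((lj (e (r : ℕ)) : ℕ) : ℝ) * u := by rw [hPr, hle r]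
      have hfloor1 : lo (e (r : ℕ)) < ((⌊lo (e (r : ℕ)) / u⌋₊ : ℝ) + 1) * u := by
        have h := Nat.lt_floor_add_one (lo (e (r : ℕ)) / u)
        calc lo (e (r : ℕ)) = (lo (e (r : ℕ)) / u) * u := by field_simp
          _ < ((⌊lo (e (r : ℕ)) / u⌋₊ : ℝ) + 1) * u := by
              exact mul_lt_mul_of_pos_right h hupos
      have hfloor2 : ((⌊lo (e (r : ℕ)) / u⌋₊ : ℝ)) * u ≤ lo (e (r : ℕ)) := by
        have h := Nat.floor_le (div_nonneg (hlo0 (e (r : ℕ))) hupos.le)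
        calc ((⌊lo (e (r : ℕ)) / u⌋₊ : ℝ)) * u ≤ (lo (e (r : ℕ)) / u) * u :=
              mul_le_mul_of_nonneg_right h hupos.le
          _ = lo (e (r : ℕ)) := by field_simp
      have hljr : ((lj (e (r : ℕ)) : ℕ) : ℝ) = (⌊lo (e (r : ℕ)) / u⌋₊ : ℝ) + 2 := by
        show ((⌊lo (e (r : ℕ)) / u⌋₊ + 2 : ℕ) : ℝ) = _
        push_cast
        ring
      have hloP : lo (e (r : ℕ)) + u < Pr := by
        rw [hPrj, hljr]
        nlinarith [hfloor1]
      have h32 : (1:ℝ)/Mr = 32*u := by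
        rw [hu]
        field_simp
      have hQhi : Qr + u < hi (e (r : ℕ)) := by
        have hge := hgaplh (e (r : ℕ))
        rw [h32] at hge
        rw [hQr, hPrj, hljr]
        nlinarith [hfloor2]
      have horeq : orj (e (r : ℕ)) = c.2.2 := hore r
      have habs := abs_lt.mp hclose
      by_cases hεbr : εb r = true
      · rw [if_pos hεbr]
        show Qr < ((i (pt A) (DD (g (e (r : ℕ))) tstar) : ℝ))
        by_cases hc2 : c.2.2 = true
        · have hbitsr : bits r = true := by rw [hbits]; simp [hc2, hεbr]
          rw [if_pos hbitsr] at hend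
          have hab : aj (e (r : ℕ)) ≤ bj (e (r : ℕ)) := by
            have : orj (e (r : ℕ)) = true := horeq.trans hc2
            rw [horj] at this
            exact of_decide_eq_true this
          have hhij : hi (e (r : ℕ)) = bj (e (r : ℕ)) := max_eq_right hab
          rw [hend] at habs
          rw [← hhij] at habs
          linarith [habs.1, habs.2, hQhi]
        · have hc2f : c.2.2 = false := Bool.not_eq_true _ |>.mp hc2
          have hbitsr : bits r = false := by rw [hbits]; simp [hc2f, hεbr]
          have hbitsr' : ¬ (bits r = true) := by rw [hbitsr]; simp
          rw [if_neg hbitsr'] at hend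
          have hba : bj (e (r : ℕ)) < aj (e (r : ℕ)) := by
            have hfalse : orj (e (r : ℕ)) = false := horeq.trans hc2f
            rw [horj] at hfalse
            exact not_le.mp (of_decide_eq_false hfalse)
          have hhij : hi (e (r : ℕ)) = aj (e (r : ℕ)) := max_eq_left hba.le
          rw [hend, ← hhij] at habs
          linarith [habs.1, habs.2, hQhi]
      · rw [if_neg hεbr]
        show ((i (pt A) (DD (g (e (r : ℕ))) tstar) : ℝ)) < Pr
        have hεbf : εb r = false := Bool.not_eq_true _ |>.mp hεbr
        by_cases hc2 : c.2.2 = true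
        · have hbitsr : bits r = false := by rw [hbits]; simp [hc2, hεbf]
          have hbitsr' : ¬ (bits r = true) := by rw [hbitsr]; simp
          rw [if_neg hbitsr'] at hend
          have hab : aj (e (r : ℕ)) ≤ bj (e (r : ℕ)) := by
            have : orj (e (r : ℕ)) = true := horeq.trans hc2
            rw [horj] at this
            exact of_decide_eq_true this
          have hloj : lo (e (r : ℕ)) = aj (e (r : ℕ)) := min_eq_left hab
          rw [hend, ← hloj] at habs
          linarith [habs.1, habs.2, hloP]
        · have hc2f : c.2.2 = false := Bool.not_eq_true _ |>.mp hc2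
          have hbitsr : bits r = true := by rw [hbits]; simp [hc2f, hεbf]
          rw [if_pos hbitsr] at hend
          have hba : bj (e (r : ℕ)) < aj (e (r : ℕ)) := by
            have hfalse : orj (e (r : ℕ)) = false := horeq.trans hc2f
            rw [horj] at hfalse
            exact not_le.mp (of_decide_eq_false hfalse)
          have hloj : lo (e (r : ℕ)) = bj (e (r : ℕ)) := min_eq_right hba.le
          rw [hend, ← hloj] at habs
          linarith [habs.1, habs.2, hloP]
end

section
/- Talagrand's compact space is not quasi weakly Radon–Nikodým. -/
open Set Function

/-- Talagrand's compact: the subspace of `{0,1}^(ℕ^ℕ)` consisting of the characteristic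
functions of those sets `A ⊆ ℕ^ℕ` for which there is `n` such that any two distinct members
of `A` agree on the first `n` coordinates and differ in the next one. -/
def TalagrandCompact : Set ((ℕ → ℕ) → Bool) :=
  {χ | ∃ n : ℕ, ∀ x y : ℕ → ℕ, χ x = true → χ y = true → x ≠ y →
    (∀ k < n, x k = y k) ∧ x n ≠ y n}

/-! Suppose `i : T → [0,1]^Γ` witnesses that Talagrand's compact `T` is QWRN. For each
`x ∈ ℕ^ℕ` some coordinate `α` separates `1_{x}` from `1_∅` by a rational gap `p < q` wider than
some `1/(r+1)`, and since `T` carries the product topology this separation is already forced by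
the values of a point of `T` on a finite set `D x`. The countably many possible values of
`(r, n, p, q, side, #D x)`, where `α ∈ Γ^{1/(r+1)}_n`, cover `ℕ^ℕ`, so by the Baire category
theorem one of them is dense in a cylinder: this gives a fan `X j` (common stem below `m`,
`X j m = j`) of points sharing the same data. Since the sets `D (X j)` have bounded size, a
free-set argument passes to a subsequence in which no point lies in the `D` of another. Then,
for every finite pattern `τ`, the indicator of `{X j | τ j = side}` lies in `T` and realises
`τ` on the coordinates `α (X j)`, which all lie in one `Γ_n`: an independent sequence. -/

open Topology

/-- The default colour `0` is never used when `(G k).card ≤ b`, see `greedyColoring_ne`. -/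
noncomputable def greedyColoring (G : ℕ → Finset ℕ) (b : ℕ) : ℕ → Fin (b + 1)
  | k => if h : ∃ v : Fin (b + 1), ∀ l : Fin k, (l : ℕ) ∈ G k → greedyColoring G b l ≠ v
      then h.choose else 0

theorem greedyColoring_ne {G : ℕ → Finset ℕ} {b : ℕ} (hG : ∀ k, (G k).card ≤ b) {k l : ℕ}
    (hlk : l < k) (hl : l ∈ G k) : greedyColoring G b l ≠ greedyColoring G b k := by
  have hfree : ∃ v : Fin (b + 1), ∀ l : Fin k, (l : ℕ) ∈ G k → greedyColoring G b l ≠ v := by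
    have hcard : ((G k).image (greedyColoring G b)).card <
        (Finset.univ : Finset (Fin (b + 1))).card := by
      simpa using Finset.card_image_le.trans_lt (Nat.lt_succ_of_le (hG k))
    obtain ⟨v, -, hv⟩ := Finset.exists_mem_notMem_of_card_lt_card hcard
    exact ⟨v, fun l hl hlv => hv (hlv ▸ Finset.mem_image_of_mem _ hl)⟩
  conv_rhs => rw [greedyColoring, dif_pos hfree]
  exact hfree.choose_spec ⟨l, hlk⟩ hl

theorem exists_strictMono_forall_lt_notMem_of_card_le {G : ℕ → Finset ℕ} {b : ℕ}
    (hG : ∀ k, (G k).card ≤ b) :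
    ∃ φ : ℕ → ℕ, StrictMono φ ∧ ∀ ⦃j k⦄, j < k → φ j ∉ G (φ k) := by
  obtain ⟨v, hv⟩ := Finite.exists_infinite_fiber (greedyColoring G b)
  have hinf : (greedyColoring G b ⁻¹' {v}).Infinite := Set.infinite_coe_iff.mp hv
  refine ⟨Nat.nth (· ∈ greedyColoring G b ⁻¹' {v}), Nat.nth_strictMono hinf,
    fun j k hjk hmem => greedyColoring_ne hG (Nat.nth_strictMono hinf hjk) hmem ?_⟩
  rw [Nat.nth_mem_of_infinite hinf j, Nat.nth_mem_of_infinite hinf k]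

theorem exists_strictMono_forall_lt_notMem (F : ℕ → Finset ℕ) :
    ∃ s : ℕ → ℕ, StrictMono s ∧ ∀ ⦃j k⦄, j < k → s k ∉ F (s j) := by
  let next : ℕ → ℕ := fun n => (Finset.range (n + 1)).sup (fun k => (F k).sup id) + n + 1
  have hlt_next : ∀ {n k}, k ≤ n → ∀ a ∈ F k, a < next n := fun {n k} hkn a ha => by
    have := (Finset.le_sup (f := id) ha).trans
      (Finset.le_sup (f := fun k => (F k).sup id) (Finset.mem_range.mpr (by omega : k < n + 1)))
    simp only [id, next] at this ⊢
    omega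
  have hs : ∀ j, next^[j + 1] 0 = next (next^[j] 0) := fun j => iterate_succ_apply' _ _ _
  have hmono : StrictMono fun j => next^[j] 0 :=
    strictMono_nat_of_lt_succ fun j => by rw [hs]; simp only [next]; omega
  refine ⟨fun j => next^[j] 0, hmono, fun j k hjk hmem => ?_⟩
  have := hlt_next le_rfl _ hmem
  rw [← hs] at this
  exact (hmono.monotone hjk).not_gt this

/-- Free sets for set mappings of bounded finite order: forward conflicts are removed by a fast
growing subsequence, backward ones by greedy colouring. -/
theorem exists_strictMono_forall_ne_notMem {F : ℕ → Finset ℕ} {b : ℕ}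
    (hF : ∀ k, (F k).card ≤ b) :
    ∃ φ : ℕ → ℕ, StrictMono φ ∧ Pairwise fun j k => φ j ∉ F (φ k) := by
  obtain ⟨s, hs, hs_fwd⟩ := exists_strictMono_forall_lt_notMem F
  let G : ℕ → Finset ℕ := fun k => (F (s k)).preimage s hs.injective.injOn
  have hG : ∀ k, (G k).card ≤ b := fun k =>
    (Finset.card_le_card_of_injOn s (fun _ hl => Finset.mem_preimage.mp hl)
      hs.injective.injOn).trans (hF _)
  obtain ⟨ψ, hψ, hψ_bwd⟩ := exists_strictMono_forall_lt_notMem_of_card_le hG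
  refine ⟨s ∘ ψ, hs.comp hψ, fun j k hjk => ?_⟩
  rcases hjk.lt_or_gt with hlt | hgt
  · exact fun hmem => hψ_bwd hlt (Finset.mem_preimage.mpr hmem)
  · exact hs_fwd (hψ hgt)

theorem exists_finset_forall_eqOn_mem {ι β : Type*} [TopologicalSpace β] {s : Set (ι → β)}
    {f : s} {U : Set s} (hU : U ∈ 𝓝 f) :
    ∃ D : Finset ι, ∀ g : s, (∀ i ∈ D, (g : ι → β) i = (f : ι → β) i) → g ∈ U := by
  obtain ⟨V, hV, hVU⟩ := (mem_nhds_subtype s f U).mp hU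
  obtain ⟨D, t, ht, hDt⟩ := Filter.mem_pi'.mp (by rwa [nhds_pi] at hV)
  exact ⟨D, fun g hg => hVU (hDt fun i hi => (hg i hi).symm ▸ mem_of_mem_nhds (ht i))⟩

theorem exists_fan_of_countable {κ : Type*} [Countable κ] (c : (ℕ → ℕ) → κ) :
    ∃ (d : κ) (m : ℕ) (y : ℕ → ℕ), ∀ j : ℕ,
      ∃ x, c x = d ∧ x ∈ PiNat.cylinder y m ∧ x m = j := by
  obtain ⟨d, z, hz⟩ := nonempty_interior_of_iUnion_of_closed
    (f := fun d => closure (c ⁻¹' {d})) (fun _ => isClosed_closure)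
    (iUnion_eq_univ_iff.mpr fun x => ⟨c x, subset_closure rfl⟩)
  obtain ⟨_, ⟨y, m, rfl⟩, -, hsub⟩ :=
    (PiNat.isTopologicalBasis_cylinders _).exists_subset_of_mem_open hz isOpen_interior
  refine ⟨d, m, y, fun j => ?_⟩
  have hclos : update y m j ∈ closure (c ⁻¹' {d}) :=
    interior_subset (hsub (PiNat.update_mem_cylinder y m j))
  obtain ⟨x, hx, hxd⟩ := mem_closure_iff.mp hclos _ (PiNat.isOpen_cylinder _ _ (m + 1))
    (PiNat.self_mem_cylinder _ _)
  have hxm : ∀ t < m + 1, x t = update y m j t := PiNat.mem_cylinder_iff.mp hx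
  refine ⟨x, hxd, PiNat.mem_cylinder_iff.mpr fun t ht => ?_, by simpa using hxm m m.lt_succ_self⟩
  simpa [ht.ne] using hxm t (by omega)

def gapSide (p q : ℝ) (o : Bool) : Set ℝ := if o then Ioi q else Iio p

theorem isOpen_gapSide (p q : ℝ) (o : Bool) : IsOpen (gapSide p q o) := by
  cases o
  · exact isOpen_Iio
  · exact isOpen_Ioi

theorem exists_rat_gap_of_lt {u v : ℝ} (h : u < v) :
    ∃ (r : ℕ) (p q : ℚ), 1 / ((r : ℝ) + 1) < q - p ∧ u < p ∧ q < v := by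
  obtain ⟨r, hr⟩ := exists_nat_one_div_lt (by linarith : 0 < (v - u) / 3)
  obtain ⟨p, hup, hp⟩ := exists_rat_btwn (by linarith : u < u + (v - u) / 3)
  obtain ⟨q, hq, hqv⟩ := exists_rat_btwn (by linarith : v - (v - u) / 3 < v)
  exact ⟨r, p, q, by linarith, hup, hqv⟩

theorem exists_rat_gap {u v : ℝ} (h : u ≠ v) :
    ∃ (r : ℕ) (p q : ℚ) (o : Bool), 1 / ((r : ℝ) + 1) < q - p ∧
      u ∈ gapSide p q o ∧ v ∈ gapSide p q (!o) := by
  rcases h.lt_or_gt with huv | hvu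
  · obtain ⟨r, p, q, hgap, hu, hv⟩ := exists_rat_gap_of_lt huv
    exact ⟨r, p, q, false, hgap, hu, hv⟩
  · obtain ⟨r, p, q, hgap, hv, hu⟩ := exists_rat_gap_of_lt hvu
    exact ⟨r, p, q, true, hgap, hu, hv⟩

theorem exists_coord_rat_gap {X Γ : Type*} [TopologicalSpace X] {i : X → Γ → unitInterval}
    (hc : Continuous i) (hinj : Injective i) {f g : X} (hfg : f ≠ g) :
    ∃ (α : Γ) (r : ℕ) (p q : ℚ) (o : Bool), 1 / ((r : ℝ) + 1) < q - p ∧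
      (∀ᶠ h in 𝓝 f, (i h α : ℝ) ∈ gapSide p q o) ∧
      ∀ᶠ h in 𝓝 g, (i h α : ℝ) ∈ gapSide p q (!o) := by
  obtain ⟨α, hα⟩ := ne_iff.mp (hinj.ne hfg)
  obtain ⟨r, p, q, o, hgap, hf, hg⟩ := exists_rat_gap fun h => hα (Subtype.ext h)
  have hcα : Continuous fun h => (i h α : ℝ) :=
    continuous_subtype_val.comp ((continuous_apply α).comp hc)
  exact ⟨α, r, p, q, o, hgap,
    hcα.continuousAt.eventually_mem ((isOpen_gapSide _ _ _).mem_nhds hf),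
    hcα.continuousAt.eventually_mem ((isOpen_gapSide _ _ _).mem_nhds hg)⟩

theorem boolIndicator_mem_talagrandCompact {S : Set (ℕ → ℕ)} {m : ℕ}
    (hS : S.Pairwise fun u v => (∀ k < m, u k = v k) ∧ u m ≠ v m) :
    S.boolIndicator ∈ TalagrandCompact :=
  ⟨m, fun _ _ hx hy hxy =>
    hS ((mem_iff_boolIndicator _ _).mpr hx) ((mem_iff_boolIndicator _ _).mpr hy) hxy⟩

theorem exists_finset_separating_singleton_empty {Γ : Type*}
    {i : TalagrandCompact → Γ → unitInterval} (hc : Continuous i) (hinj : Injective i)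
    (x : ℕ → ℕ) :
    ∃ (α : Γ) (r : ℕ) (p q : ℚ) (o : Bool) (D : Finset (ℕ → ℕ)),
      1 / ((r : ℝ) + 1) < q - p ∧
      (∀ χ : TalagrandCompact, (∀ z ∈ D, χ.1 z = ({x} : Set (ℕ → ℕ)).boolIndicator z) →
        (i χ α : ℝ) ∈ gapSide p q o) ∧
      (∀ χ : TalagrandCompact, (∀ z ∈ D, χ.1 z = false) → (i χ α : ℝ) ∈ gapSide p q (!o)) := by
  classical
  let χx : TalagrandCompact :=
    ⟨_, boolIndicator_mem_talagrandCompact (m := 0) (pairwise_singleton x _)⟩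
  let χ₀ : TalagrandCompact := ⟨_, boolIndicator_mem_talagrandCompact (m := 0) (pairwise_empty _)⟩
  have hne : χx ≠ χ₀ := fun h => by
    simpa [χx, χ₀, boolIndicator] using congr_fun (congrArg Subtype.val h) x
  obtain ⟨α, r, p, q, o, hgap, hx, h₀⟩ := exists_coord_rat_gap hc hinj hne
  obtain ⟨Dx, hDx⟩ := exists_finset_forall_eqOn_mem hx
  obtain ⟨D₀, hD₀⟩ := exists_finset_forall_eqOn_mem h₀
  refine ⟨α, r, p, q, o, Dx ∪ D₀, hgap, fun χ hχ => hDx χ fun z hz => ?_,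
    fun χ hχ => hD₀ χ fun z hz => ?_⟩
  · exact hχ z (Finset.mem_union_left _ hz)
  · simpa [χ₀, boolIndicator] using hχ z (Finset.mem_union_right _ hz)

theorem isIndependentSeq_of_free_fan {Γ : Type*} {i : TalagrandCompact → Γ → unitInterval}
    {p q : ℝ} {o : Bool} {Y : ℕ → ℕ → ℕ} {a : ℕ → Γ} {D : ℕ → Finset (ℕ → ℕ)}
    {y : ℕ → ℕ} {m : ℕ} (hprefix : ∀ k, Y k ∈ PiNat.cylinder y m)
    (hbranch : Injective fun k => Y k m) (hfree : Pairwise fun j k => Y j ∉ D k)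
    (hsing : ∀ k, ∀ χ : TalagrandCompact,
      (∀ z ∈ D k, χ.1 z = ({Y k} : Set (ℕ → ℕ)).boolIndicator z) →
        (i χ (a k) : ℝ) ∈ gapSide p q o)
    (hempty : ∀ k, ∀ χ : TalagrandCompact,
      (∀ z ∈ D k, χ.1 z = false) → (i χ (a k) : ℝ) ∈ gapSide p q (!o)) :
    IsIndependentSeq (fun k => {χ : TalagrandCompact | (i χ (a k) : ℝ) < p})
      (fun k => {χ : TalagrandCompact | (i χ (a k) : ℝ) > q}) := by
  intro N τ
  let S : Set (ℕ → ℕ) := {z | ∃ j : Fin N, τ j = o ∧ z = Y j}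
  have hS : S.boolIndicator ∈ TalagrandCompact := by
    refine boolIndicator_mem_talagrandCompact (m := m) ?_
    rintro _ ⟨j, -, rfl⟩ _ ⟨k, -, rfl⟩ hne
    refine ⟨fun t ht => ?_, fun h => hne (by rw [hbranch h])⟩
    rw [PiNat.mem_cylinder_iff.mp (hprefix j) t ht, PiNat.mem_cylinder_iff.mp (hprefix k) t ht]
  have hS_on_D : ∀ k : Fin N, ∀ z ∈ D k, z ∈ S ↔ z = Y k ∧ τ k = o := by
    refine fun k z hz => ⟨?_, fun ⟨hzk, hk⟩ => ⟨k, hk, hzk⟩⟩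
    rintro ⟨j, hj, rfl⟩
    obtain rfl : j = k := Fin.ext (by_contra fun hjk => hfree hjk hz)
    exact ⟨rfl, hj⟩
  refine ⟨⟨_, hS⟩, mem_iInter.mpr fun k => ?_⟩
  have hside : (i ⟨_, hS⟩ (a k) : ℝ) ∈ gapSide p q (τ k) := by
    by_cases hk : τ k = o
    · refine hk ▸ hsing k _ fun z hz => ?_
      rw [Bool.eq_iff_iff, ← mem_iff_boolIndicator, ← mem_iff_boolIndicator, hS_on_D k z hz,
        mem_singleton_iff, hk, and_iff_left rfl]
    · convert hempty k _ fun z hz => ?_ using 2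
      · cases o <;> simpa using hk
      · simpa [← notMem_iff_boolIndicator, hS_on_D k z hz] using fun _ => hk
  cases h : τ k <;> simpa [gapSide, h] using hside

/-- Talagrand's compact space is not QWRN. -/
theorem talagrandCompact_not_isQWRN : ¬ IsQWRN TalagrandCompact := by
  rintro ⟨Γ, i, hi, hQ⟩
  choose Γs hcover hnoIndep using fun r : ℕ => hQ (1 / ((r : ℝ) + 1)) (by positivity)
  choose α r p q o D hgap hsing hempty using
    exists_finset_separating_singleton_empty hi.continuous hi.injective
  choose n hn using fun x => iUnion_eq_univ_iff.mp (hcover (r x)) (α x)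
  obtain ⟨⟨r₀, n₀, p₀, q₀, o₀, b⟩, m, y, hfan⟩ :=
    exists_fan_of_countable fun x => (r x, n x, p x, q x, o x, (D x).card)
  choose X hXtype hXy hXm using hfan
  simp only [Prod.mk.injEq] at hXtype
  have hXinj : Injective X := fun j k h => by rw [← hXm j, ← hXm k, h]
  obtain ⟨φ, hφ, hfree⟩ := exists_strictMono_forall_ne_notMem (b := b)
    (F := fun j => (D (X j)).preimage X hXinj.injOn) fun j =>
      (Finset.card_le_card_of_injOn X (fun _ hl => Finset.mem_preimage.mp hl)
        hXinj.injOn).trans (hXtype j).2.2.2.2.2.le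
  refine hnoIndep r₀ n₀ p₀ q₀ ?_ ⟨fun k => α (X (φ k)), fun k => ?_, ?_⟩
  · obtain ⟨hr, -, hp, hq, -⟩ := hXtype 0
    simpa [hr, hp, hq] using hgap (X 0)
  · obtain ⟨hr, hn', -⟩ := hXtype (φ k)
    simpa [hr, hn'] using hn (X (φ k))
  refine isIndependentSeq_of_free_fan (Y := fun k => X (φ k)) (D := fun k => D (X (φ k)))
    (o := o₀) (fun k => hXy (φ k)) (fun j k h => hφ.injective (by simpa [hXm] using h))
    (fun j k hjk h => hfree hjk (Finset.mem_preimage.mpr h)) (fun k χ hχ => ?_)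
    (fun k χ hχ => ?_)
  · obtain ⟨-, -, hp, hq, ho, -⟩ := hXtype (φ k)
    simpa [hp, hq, ho] using hsing _ χ hχ
  · obtain ⟨-, -, hp, hq, ho, -⟩ := hXtype (φ k)
    simpa [hp, hq, ho] using hempty _ χ hχ
end
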